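/- arXiv:2311.10124 — 10 statements merged into one kernel-verified Lean document; each statement's English description precedes it below -/
import Mathlib

section
/- Let n be a positive integer and let ρ be a complex number with ρ ≠ 0 and ρ ≠ 1. Then the Apostol-Bernoulli number satisfies 𝓑_n(ρ) = (n·ρ/(ρ−1)^n) · Σ_{s=0}^{n−1} (−1)^s · s! · ρ^{s−1} · (ρ−1)^{n−1−s} · S₂(n−1,s). -/
/-!
Write `ρ e^t - 1 = (ρ - 1) (1 - x)` with `x = -(ρ / (ρ - 1)) (e^t - 1)`. Since `t ∣ x`, the
coefficient of `t^m` in `(1 - x)⁻¹` only sees the truncated geometric series `∑_{s ≤ m} x^s`,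
and the coefficient of `t^m` in `(e^t - 1)^s` is `s! S₂(m, s) / m!`.
-/

open Finset Nat

/-- The Apostol-Bernoulli numbers `𝓑_n(ρ)`, defined by the generating function
`t / (ρ e^t - 1) = Σ_{n≥0} 𝓑_n(ρ) t^n / n!` (as a formal power series). -/
noncomputable def apostolBernoulliNum (n : ℕ) (ρ : ℂ) : ℂ :=
  (n ! : ℂ) * PowerSeries.coeff n (PowerSeries.X * (ρ • PowerSeries.exp ℂ - 1)⁻¹)

/-- The Stirling numbers of the second kind `S₂(n,c)`, defined by
`(e^t - 1)^c = Σ_{n≥0} c! S₂(n,c) t^n / n!`. -/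
noncomputable def stirling2 (n c : ℕ) : ℂ :=
  ((n ! : ℂ) / (c ! : ℂ)) * PowerSeries.coeff n ((PowerSeries.exp ℂ - 1) ^ c)

namespace PowerSeries
open scoped PowerSeries

variable {k : Type*} [Field k]

theorem coeff_inv_one_sub_of_X_dvd {g : k⟦X⟧} (hg : X ∣ g) (m : ℕ) :
    coeff m (1 - g)⁻¹ = ∑ s ∈ range (m + 1), coeff m (g ^ s) := by
  have hconst : constantCoeff (1 - g) ≠ 0 := by
    simp [X_dvd_iff.mp hg]
  have hgeom : (1 - g)⁻¹ = ∑ s ∈ range (m + 1), g ^ s + (1 - g)⁻¹ * g ^ (m + 1) := by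
    rw [PowerSeries.inv_eq_iff_mul_eq_one hconst, add_mul, mul_right_comm,
      PowerSeries.inv_mul_cancel _ hconst, one_mul, mul_comm, mul_neg_geom_sum, sub_add_cancel]
  have htail : coeff m ((1 - g)⁻¹ * g ^ (m + 1)) = 0 :=
    X_pow_dvd_iff.mp ((pow_dvd_pow_of_dvd hg _).mul_left _) m m.lt_succ_self
  rw [hgeom, map_add, htail, add_zero, map_sum]

theorem coeff_inv_smul_sub_one {f : k⟦X⟧} (hf : constantCoeff f = 1) {ρ : k} (hρ : ρ ≠ 1)
    (m : ℕ) :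
    coeff m (ρ • f - 1)⁻¹ =
      (ρ - 1)⁻¹ * ∑ s ∈ range (m + 1), (-(ρ / (ρ - 1))) ^ s * coeff m ((f - 1) ^ s) := by
  have hρ' : ρ - 1 ≠ 0 := sub_ne_zero.mpr hρ
  have hfactor : ρ • f - 1 = (ρ - 1) • (1 - (-(ρ / (ρ - 1))) • (f - 1)) := by
    rw [smul_sub, neg_smul, smul_neg, smul_smul, mul_div_cancel₀ _ hρ', sub_smul, one_smul, smul_sub]
    abel
  have hX : X ∣ (-(ρ / (ρ - 1))) • (f - 1) := by
    refine dvd_smul_of_dvd _ (X_dvd_iff.mpr ?_)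
    simp [hf]
  simp only [hfactor, smul_inv, coeff_inv_one_sub_of_X_dvd hX, map_smul, smul_pow, smul_eq_mul]

end PowerSeries

theorem coeff_pow_exp_sub_one (m s : ℕ) :
    PowerSeries.coeff m ((PowerSeries.exp ℂ - 1) ^ s) = stirling2 m s * s ! / m ! := by
  rw [stirling2]
  field_simp [Nat.factorial_ne_zero]

theorem stmt0 (n : ℕ) (hn : 0 < n) (ρ : ℂ) (hρ0 : ρ ≠ 0) (hρ1 : ρ ≠ 1) :
    apostolBernoulliNum n ρ =
      ((n : ℂ) * ρ / (ρ - 1) ^ n) *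
        ∑ s ∈ Finset.range n,
          (-1 : ℂ) ^ s * (s ! : ℂ) * ρ ^ ((s : ℤ) - 1) * (ρ - 1) ^ (n - 1 - s) *
            stirling2 (n - 1) s := by
  obtain ⟨m, rfl⟩ := Nat.exists_eq_add_one.mpr hn
  have hρ1' : ρ - 1 ≠ 0 := sub_ne_zero.mpr hρ1
  rw [apostolBernoulliNum, PowerSeries.coeff_succ_X_mul,
    PowerSeries.coeff_inv_smul_sub_one (by simp) hρ1, Nat.add_sub_cancel, mul_sum, mul_sum, mul_sum]
  refine sum_congr rfl fun s hs => ?_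
  have hsm : s ≤ m := Nat.lt_succ_iff.mp (mem_range.mp hs)
  rw [coeff_pow_exp_sub_one, zpow_sub₀ hρ0, zpow_natCast, zpow_one, Nat.factorial_succ,
    pow_sub₀ _ hρ1' hsm, neg_pow, div_pow]
  push_cast
  field_simp [Nat.factorial_ne_zero]
  ring
end

section
/- Let m be an integer with m ≥ 2 and let ρ be a complex number with ρ ≠ 1. Then the Apostol-Bernoulli polynomial satisfies 𝓑_m(ω;ρ) = (m/(ρ−1)) · ( ω^{m−1} + Σ_{n=1}^{m−1} (ρ/(1−ρ))^n · n! · S_n^{m−1}(ω) ), where S_n^{m−1}(ω) is the array polynomial. -/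
open Finset Nat

/-- The Apostol-Bernoulli polynomials `𝓑_n(ω;ρ)`, defined by the generating function
`t e^{ωt} / (ρ e^t - 1) = Σ_{n≥0} 𝓑_n(ω;ρ) t^n / n!` (as a formal power series). -/
noncomputable def apostolBernoulliPoly (n : ℕ) (ω ρ : ℂ) : ℂ :=
  (n ! : ℂ) * PowerSeries.coeff n
    (PowerSeries.X * PowerSeries.rescale ω (PowerSeries.exp ℂ) *
      (ρ • PowerSeries.exp ℂ - 1)⁻¹)

/-- The array polynomials `S_c^n(ω) = (1/c!) Σ_{j=0}^c (−1)^{c−j} C(c,j) (ω+j)^n`,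
equivalently defined by `e^{tω}(e^t − 1)^c = Σ_{n≥0} c! S_c^n(ω) t^n/n!`. -/
noncomputable def arrayPoly (c n : ℕ) (ω : ℂ) : ℂ :=
  (1 / (c ! : ℂ)) *
    ∑ j ∈ Finset.range (c + 1), (-1 : ℂ) ^ (c - j) * (c.choose j : ℂ) * (ω + j) ^ n

/-!
With `q = ρ / (1 - ρ)` one has `ρ e^t - 1 = (ρ - 1)(1 - q (e^t - 1))`, so expanding the inverse as
a geometric series in `q (e^t - 1)` gives
`t e^{ωt} / (ρ e^t - 1) = t / (ρ - 1) · Σ_n q^n e^{ωt} (e^t - 1)^n`.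
Since `(e^t - 1)^n = O(t^n)`, only the terms `n < m` reach the coefficient of `t^m`, and the
coefficient of `t^{m-1}` in `e^{ωt} (e^t - 1)^n` is `n! S_n^{m-1}(ω) / (m-1)!`.
-/

open PowerSeries

theorem eq_geom_sum_add_pow_mul_of_one_sub_mul_eq_one {R : Type*} [CommRing R] {x u : R}
    (h : (1 - x) * u = 1) (N : ℕ) : u = ∑ i ∈ range N, x ^ i + x ^ N * u := by
  linear_combination (∑ i ∈ range N, x ^ i) * h - u * mul_neg_geom_sum x N

theorem coeff_pow_mul_eq_zero_of_constantCoeff_eq_zero {R : Type*} [CommSemiring R]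
    {x : R⟦X⟧} (hx : constantCoeff x = 0) (f : R⟦X⟧) {k N : ℕ} (hk : k < N) :
    coeff k (x ^ N * f) = 0 :=
  X_pow_dvd_iff.mp ((pow_dvd_pow_of_dvd (X_dvd_iff.mpr hx) N).mul_right f) k hk

theorem smul_sub_one_eq_smul_one_sub {K A : Type*} [Field K] [Ring A] [Algebra K A] {ρ : K}
    (hρ : ρ ≠ 1) (f : A) :
    ρ • f - 1 = (ρ - 1) • (1 - (ρ / (1 - ρ)) • (f - 1)) := by
  have h : (ρ - 1) * (ρ / (1 - ρ)) = -ρ := by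
    field_simp [sub_ne_zero.mpr hρ.symm]
    ring
  rw [smul_sub, smul_smul, h, neg_smul, sub_neg_eq_add, smul_sub, sub_smul, one_smul]
  abel

theorem coeff_mul_inv_smul_exp_sub_one {K : Type*} [Field K] [Algebra ℚ K] {ρ : K} (hρ : ρ ≠ 1)
    (f : K⟦X⟧) (k : ℕ) :
    coeff k (f * (ρ • exp K - 1)⁻¹) =
      (ρ - 1)⁻¹ * ∑ n ∈ range (k + 1), (ρ / (1 - ρ)) ^ n * coeff k (f * (exp K - 1) ^ n) := by
  set x : K⟦X⟧ := (ρ / (1 - ρ)) • (exp K - 1)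
  have hx : constantCoeff x = 0 := by simp [x]
  have hunit : (1 - x) * ((ρ - 1) • (ρ • exp K - 1)⁻¹) = 1 := by
    rw [mul_smul_comm, ← smul_mul_assoc, ← smul_sub_one_eq_smul_one_sub hρ]
    exact PowerSeries.mul_inv_cancel _ (by simpa using sub_ne_zero.mpr hρ)
  rw [← inv_smul_smul₀ (sub_ne_zero.mpr hρ) (ρ • exp K - 1)⁻¹,
    eq_geom_sum_add_pow_mul_of_one_sub_mul_eq_one hunit (k + 1), mul_smul_comm, map_smul,
    mul_add, map_add, mul_left_comm,
    coeff_pow_mul_eq_zero_of_constantCoeff_eq_zero hx _ k.lt_succ_self, add_zero, mul_sum,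
    map_sum, smul_eq_mul]
  simp only [x, smul_pow, mul_smul_comm, map_smul, smul_eq_mul]

theorem rescale_exp_mul_exp_pow {A : Type*} [CommRing A] [Algebra ℚ A] (a : A) (j : ℕ) :
    rescale a (exp A) * exp A ^ j = rescale (a + j) (exp A) := by
  rw [exp_pow_eq_rescale_exp, exp_mul_exp_eq_exp_add]

theorem factorial_mul_arrayPoly (c n : ℕ) (ω : ℂ) :
    c ! * arrayPoly c n ω =
      ∑ j ∈ range (c + 1), (-1 : ℂ) ^ (c - j) * (c.choose j : ℂ) * (ω + j) ^ n := by
  rw [arrayPoly, ← mul_assoc, mul_one_div_cancel (by exact_mod_cast c.factorial_ne_zero), one_mul]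

theorem arrayPoly_zero_left (n : ℕ) (ω : ℂ) : arrayPoly 0 n ω = ω ^ n := by
  simp [arrayPoly]

theorem coeff_rescale_exp_mul_exp_sub_one_pow (ω : ℂ) (n k : ℕ) :
    coeff k (rescale ω (exp ℂ) * (exp ℂ - 1) ^ n) = n ! * arrayPoly n k ω / k ! := by
  rw [factorial_mul_arrayPoly, sub_eq_add_neg, add_pow, mul_sum, map_sum, sum_div]
  refine sum_congr rfl fun j _ => ?_
  rw [← mul_assoc, ← mul_assoc, rescale_exp_mul_exp_pow, ← map_natCast C, ← map_one C,
    ← map_neg C, ← map_pow, coeff_mul_C, coeff_mul_C, coeff_rescale, coeff_exp]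
  simp only [one_div, map_inv₀, map_natCast]
  ring

theorem stmt1_general (m : ℕ) (ρ : ℂ) (hρ : ρ ≠ 1) (ω : ℂ) :
    apostolBernoulliPoly m ω ρ =
      ((m : ℂ) / (ρ - 1)) *
        (ω ^ (m - 1) +
          ∑ n ∈ Finset.Icc 1 (m - 1),
            (ρ / (1 - ρ)) ^ n * (n ! : ℂ) * arrayPoly n (m - 1) ω) := by
  cases m with
  | zero => simp [apostolBernoulliPoly]
  | succ k =>
    rw [apostolBernoulliPoly, mul_assoc, coeff_succ_X_mul, coeff_mul_inv_smul_exp_sub_one hρ,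
      range_eq_Ico, sum_eq_sum_Ico_succ_bot (by omega : 0 < k + 1), zero_add,
      Ico_add_one_right_eq_Icc, Nat.add_sub_cancel]
    simp only [coeff_rescale_exp_mul_exp_sub_one_pow, arrayPoly_zero_left]
    simp only [factorial_zero, cast_one, pow_zero, one_mul, ← mul_assoc, mul_div_assoc', ← sum_div,
      factorial_succ, cast_mul]
    have hk : (k ! : ℂ) ≠ 0 := cast_ne_zero.mpr k.factorial_ne_zero
    field_simp

theorem stmt1 (m : ℕ) (hm : 2 ≤ m) (ρ : ℂ) (hρ : ρ ≠ 1) (ω : ℂ) :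
    apostolBernoulliPoly m ω ρ =
      ((m : ℂ) / (ρ - 1)) *
        (ω ^ (m - 1) +
          ∑ n ∈ Finset.Icc 1 (m - 1),
            (ρ / (1 - ρ)) ^ n * (n ! : ℂ) * arrayPoly n (m - 1) ω) :=
  stmt1_general m ρ hρ ω
end

section
/- Let m be an integer with m ≥ 2 and let ρ be a complex number with ρ ≠ 1. Then the Apostol-Bernoulli polynomial satisfies 𝓑_m(ω;ρ) = (m/(ρ−1)) · ( ω^{m−1} + Σ_{v=0}^{m−1} C(m−1,v) · ω^{m−v−1} · Σ_{n=1}^{v} (ρ/(1−ρ))^n · n! · S₂(v,n) ). -/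
/-!
With `c = ρ / (1 - ρ)` one has `ρ e^t - 1 = (ρ - 1) (1 - c (e^t - 1))`, so
`1 / (ρ e^t - 1) = (ρ - 1)⁻¹ Σ_n c^n (e^t - 1)^n`. Since `(e^t - 1)^n = O(t^n)`, the
coefficient of `t^v` only sees `n ≤ v`, where it is `n! S₂(v,n) / v!`; the term `n = 0` is
`δ_{v0}` and produces the summand `ω^{m-1}`. Multiplying by `t e^{ωt}` is a binomial
convolution of exponential generating functions.
-/

open Finset Nat

namespace PowerSeries

variable {K : Type*} [Field K]

theorem coeff_inv_one_sub {f : K⟦X⟧} (hf : constantCoeff f = 0) (v : ℕ) :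
    coeff v (1 - f)⁻¹ = ∑ n ∈ range (v + 1), coeff v (f ^ n) := by
  have hinv : (1 - f) * (1 - f)⁻¹ = 1 := PowerSeries.mul_inv_cancel _ (by simp [hf])
  have hsplit : (1 - f)⁻¹ = ∑ n ∈ range (v + 1), f ^ n + f ^ (v + 1) * (1 - f)⁻¹ := by
    linear_combination
      (∑ n ∈ range (v + 1), f ^ n) * hinv - (1 - f)⁻¹ * mul_neg_geom_sum f (v + 1)
  have htail : coeff v (f ^ (v + 1) * (1 - f)⁻¹) = 0 :=
    X_pow_dvd_iff.mp ((pow_dvd_pow_of_dvd (X_dvd_iff.mpr hf) _).mul_right _) v (lt_add_one v)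
  rw [hsplit, map_add, htail, add_zero, map_sum]

theorem smul_exp_sub_one_eq [Algebra ℚ K] {ρ : K} (hρ : ρ ≠ 1) :
    ρ • exp K - 1 = (ρ - 1) • (1 - (ρ / (1 - ρ)) • (exp K - 1)) := by
  have h1ρ : 1 - ρ ≠ 0 := sub_ne_zero.mpr hρ.symm
  have hcoef : (ρ - 1) * (ρ / (1 - ρ)) = -ρ := by field_simp; ring
  rw [smul_sub, smul_smul, hcoef]
  module

theorem coeff_inv_smul_exp_sub_one [Algebra ℚ K] {ρ : K} (hρ : ρ ≠ 1) (v : ℕ) :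
    coeff v (ρ • exp K - 1)⁻¹ =
      (ρ - 1)⁻¹ * ∑ n ∈ range (v + 1), (ρ / (1 - ρ)) ^ n * coeff v ((exp K - 1) ^ n) := by
  have hconst : constantCoeff ((ρ / (1 - ρ)) • (exp K - 1)) = 0 := by simp
  simp only [smul_exp_sub_one_eq hρ, smul_inv, map_smul, coeff_inv_one_sub hconst, smul_pow,
    smul_eq_mul]

theorem factorial_mul_coeff_rescale_exp_mul [CharZero K] (ω : K) (F : K⟦X⟧) (k : ℕ) :
    (k ! : K) * coeff k (rescale ω (exp K) * F) =
      ∑ v ∈ range (k + 1), (k.choose v : K) * ω ^ (k - v) * ((v ! : K) * coeff v F) := by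
  rw [mul_comm (rescale ω (exp K)), coeff_mul,
    Nat.sum_antidiagonal_eq_sum_range_succ (fun i j => coeff i F * coeff j (rescale ω (exp K))),
    mul_sum]
  refine sum_congr rfl fun v hv => ?_
  have hchoose : (k.choose v : K) * v ! * (k - v)! = k ! := by
    exact_mod_cast Nat.choose_mul_factorial_mul_factorial (Nat.lt_succ_iff.mp (mem_range.mp hv))
  have hfact : ((k - v)! : K) ≠ 0 := Nat.cast_ne_zero.mpr (k - v).factorial_ne_zero
  rw [coeff_rescale, coeff_exp, ← hchoose, map_div₀, map_one, map_natCast]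
  field_simp

theorem factorial_succ_mul_coeff_succ_X_mul {R : Type*} [CommSemiring R] (F : R⟦X⟧) (k : ℕ) :
    ((k + 1)! : R) * coeff (k + 1) (X * F) = (k + 1) * ((k ! : R) * coeff k F) := by
  rw [coeff_succ_X_mul, factorial_succ]
  push_cast
  ring

end PowerSeries

open PowerSeries

theorem factorial_mul_stirling2 (v n : ℕ) :
    (n ! : ℂ) * stirling2 v n = v ! * coeff v ((exp ℂ - 1) ^ n) := by
  have hn : (n ! : ℂ) ≠ 0 := Nat.cast_ne_zero.mpr n.factorial_ne_zero
  rw [stirling2]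
  field_simp

theorem stirling2_zero_right (v : ℕ) : stirling2 v 0 = if v = 0 then 1 else 0 := by
  rcases v with _ | v <;> simp [stirling2, coeff_one]

theorem factorial_mul_coeff_inv_smul_exp_sub_one {ρ : ℂ} (hρ : ρ ≠ 1) (v : ℕ) :
    (v ! : ℂ) * coeff v (ρ • exp ℂ - 1)⁻¹ =
      (ρ - 1)⁻¹ * ((if v = 0 then 1 else 0) +
        ∑ n ∈ Icc 1 v, (ρ / (1 - ρ)) ^ n * n ! * stirling2 v n) := by
  rw [coeff_inv_smul_exp_sub_one hρ, mul_left_comm, mul_sum, range_eq_Ico,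
    sum_eq_sum_Ico_succ_bot (by omega : 0 < v + 1), zero_add, Ico_add_one_right_eq_Icc]
  congr 2
  · rw [pow_zero, one_mul, ← factorial_mul_stirling2, stirling2_zero_right, factorial_zero,
      cast_one, one_mul]
  · refine sum_congr rfl fun n _ => ?_
    rw [mul_assoc, factorial_mul_stirling2, mul_left_comm]

theorem stmt2_general (m : ℕ) (ρ : ℂ) (hρ : ρ ≠ 1) (ω : ℂ) :
    apostolBernoulliPoly m ω ρ =
      ((m : ℂ) / (ρ - 1)) *
        (ω ^ (m - 1) +
          ∑ v ∈ Finset.range m, ((m - 1).choose v : ℂ) * ω ^ (m - v - 1) *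
            ∑ n ∈ Finset.Icc 1 v, (ρ / (1 - ρ)) ^ n * (n ! : ℂ) * stirling2 v n) := by
  rcases m with _ | k
  · simp [apostolBernoulliPoly]
  rw [apostolBernoulliPoly, mul_assoc, factorial_succ_mul_coeff_succ_X_mul,
    factorial_mul_coeff_rescale_exp_mul]
  simp_rw [factorial_mul_coeff_inv_smul_exp_sub_one hρ]
  have hexp : ∀ v, k + 1 - v - 1 = k - v := fun v => by omega
  simp only [Nat.add_sub_cancel, hexp, mul_add, mul_left_comm _ (ρ - 1)⁻¹, ← mul_sum, mul_ite,
    mul_one, mul_zero, sum_add_distrib, sum_ite_eq', mem_range, k.zero_lt_succ, if_true,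
    choose_zero_right, Nat.sub_zero]
  push_cast
  ring

theorem stmt2 (m : ℕ) (hm : 2 ≤ m) (ρ : ℂ) (hρ : ρ ≠ 1) (ω : ℂ) :
    apostolBernoulliPoly m ω ρ =
      ((m : ℂ) / (ρ - 1)) *
        (ω ^ (m - 1) +
          ∑ v ∈ Finset.range m, ((m - 1).choose v : ℂ) * ω ^ (m - v - 1) *
            ∑ n ∈ Finset.Icc 1 v, (ρ / (1 - ρ)) ^ n * (n ! : ℂ) * stirling2 v n) :=
  stmt2_general m ρ hρ ω
end

section
/- Let m be a positive integer and let ρ be a complex number with ρ ≠ 1. Then the Eulerian polynomial satisfies A_m(ρ) = Σ_{n=1}^{m} (ρ/(1−ρ))^n · n! · (1−ρ)^m · S₂(m,n). -/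
/-!
The coefficients of `(1 - X)^(m+1) * Σ_i i^m X^i` are, by the Cauchy product, exactly the Eulerian
numbers `A_{m,j}`. On the other hand, comparing coefficients of `t^m` in
`e^{it} = (1 + (e^t - 1))^i` gives `i^m = Σ_n C(i,n) n! S₂(m,n)`, and
`Σ_i C(i,n) X^i = X^n / (1 - X)^(n+1)`, so the same series is the polynomial
`Σ_{n ≤ m} n! S₂(m,n) X^n (1 - X)^(m-n)`. Hence `A_{m,j} = 0` for `j > m` and `A_m(ρ)` is the value
of this polynomial at `ρ`.
-/

open Finset Nat

/-- The Eulerian numbers `A_{n,j} = Σ_{v=0}^j (−1)^v C(n+1,v) (j−v)^n`. -/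
noncomputable def eulerianNumber (n j : ℕ) : ℂ :=
  ∑ v ∈ Finset.range (j + 1), (-1 : ℂ) ^ v * ((n + 1).choose v : ℂ) * ((j : ℂ) - v) ^ n

/-- The Eulerian polynomials `A_n(ρ) = Σ_{j=0}^n A_{n,j} ρ^j`. -/
noncomputable def eulerianPoly (n : ℕ) (ρ : ℂ) : ℂ :=
  ∑ j ∈ Finset.range (n + 1), eulerianNumber n j * ρ ^ j

open PowerSeries

theorem PowerSeries.coeff_one_sub_X_pow {R : Type*} [CommRing R] (N v : ℕ) :
    coeff v ((1 - X : R⟦X⟧) ^ N) = (-1) ^ v * N.choose v := by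
  have h : (1 - X : R⟦X⟧) = rescale (-1) ((1 + Polynomial.X : Polynomial R) : R⟦X⟧) := by
    simp [rescale_X, sub_eq_add_neg]
  rw [h, ← map_pow, coeff_rescale, ← Polynomial.coe_pow, Polynomial.coeff_coe,
    Polynomial.coeff_one_add_X_pow]

theorem PowerSeries.mk_choose_mul_one_sub_pow {R : Type*} [CommRing R] (n : ℕ) :
    PowerSeries.mk (fun i ↦ (i.choose n : R)) * (1 - X) ^ (n + 1) = X ^ n := by
  have h : PowerSeries.mk (fun i ↦ (i.choose n : R))
      = X ^ n * PowerSeries.mk fun t ↦ ((n + t).choose n : R) := by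
    ext i
    rw [coeff_X_pow_mul', coeff_mk]
    split_ifs with hni
    · simp [Nat.add_sub_cancel' hni]
    · simp [Nat.choose_eq_zero_of_lt (not_le.mp hni)]
  rw [h, mul_assoc, mk_add_choose_mul_one_sub_pow_eq_one, mul_one]

theorem stirling2_eq_zero_of_lt {m c : ℕ} (h : m < c) : stirling2 m c = 0 := by
  have hX : X ^ c ∣ (exp ℂ - 1) ^ c := pow_dvd_pow_of_dvd (X_dvd_iff.mpr (by simp)) c
  rw [stirling2, X_pow_dvd_iff.mp hX m h, mul_zero]

theorem stirling2_zero_right_s5 {m : ℕ} (hm : m ≠ 0) : stirling2 m 0 = 0 := by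
  simp [stirling2, coeff_one, hm]

theorem coeff_exp_sub_one_pow (m c : ℕ) :
    coeff m ((exp ℂ - 1) ^ c) = c ! * stirling2 m c / m ! := by
  have hc : (c ! : ℂ) ≠ 0 := Nat.cast_ne_zero.mpr (factorial_ne_zero _)
  have hm : (m ! : ℂ) ≠ 0 := Nat.cast_ne_zero.mpr (factorial_ne_zero _)
  rw [stirling2]
  field_simp

theorem coeff_exp_pow (m i : ℕ) : coeff m (exp ℂ ^ i) = (i : ℂ) ^ m / m ! := by
  rw [exp_pow_eq_rescale_exp, coeff_rescale, coeff_exp]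
  simp [div_eq_mul_inv]

theorem cast_pow_eq_sum_choose_mul_stirling2 (i m : ℕ) :
    (i : ℂ) ^ m = ∑ n ∈ range (m + 1), (i.choose n : ℂ) * (n ! * stirling2 m n) := by
  have hm : (m ! : ℂ) ≠ 0 := Nat.cast_ne_zero.mpr (factorial_ne_zero _)
  have hexp : (i : ℂ) ^ m = ∑ n ∈ range (i + 1), (i.choose n : ℂ) * (n ! * stirling2 m n) := by
    rw [← div_left_inj' hm, ← coeff_exp_pow, show exp ℂ = (exp ℂ - 1) + 1 by ring, add_pow,
      map_sum, sum_div]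
    refine sum_congr rfl fun n _ ↦ ?_
    rw [one_pow, mul_one, ← map_natCast (C (R := ℂ)), coeff_mul_C, coeff_exp_sub_one_pow]
    ring
  rw [hexp, sum_subset (range_mono (by omega : i + 1 ≤ i + m + 1)) fun n _ hn ↦ by
      rw [Nat.choose_eq_zero_of_lt (by simpa using hn), Nat.cast_zero, zero_mul],
    ← sum_subset (range_mono (by omega : m + 1 ≤ i + m + 1)) fun n _ hn ↦ by
      rw [stirling2_eq_zero_of_lt (by simpa using hn), mul_zero, mul_zero]]

theorem one_sub_X_pow_mul_mk_pow (m : ℕ) :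
    (1 - X) ^ (m + 1) * PowerSeries.mk (fun i ↦ (i : ℂ) ^ m)
      = ∑ n ∈ range (m + 1), C (n ! * stirling2 m n) * X ^ n * (1 - X) ^ (m - n) := by
  have h : PowerSeries.mk (fun i ↦ (i : ℂ) ^ m)
      = ∑ n ∈ range (m + 1), C (n ! * stirling2 m n) * PowerSeries.mk fun i ↦ (i.choose n : ℂ) := by
    ext i
    rw [coeff_mk, cast_pow_eq_sum_choose_mul_stirling2 i m, map_sum]
    refine sum_congr rfl fun n _ ↦ ?_
    rw [coeff_C_mul, coeff_mk, mul_comm]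
  rw [h, mul_sum]
  refine sum_congr rfl fun n hn ↦ ?_
  rw [show m + 1 = (n + 1) + (m - n) by have := mem_range_succ_iff.mp hn; omega, pow_add,
    ← mk_choose_mul_one_sub_pow n]
  ring

theorem coeff_one_sub_X_pow_mul_mk_pow (m j : ℕ) :
    coeff j ((1 - X) ^ (m + 1) * PowerSeries.mk fun i ↦ (i : ℂ) ^ m) = eulerianNumber m j := by
  rw [coeff_mul, Finset.Nat.sum_antidiagonal_eq_sum_range_succ
    (fun v i ↦ coeff v ((1 - X : ℂ⟦X⟧) ^ (m + 1)) * coeff i (PowerSeries.mk fun i ↦ (i : ℂ) ^ m)),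
    eulerianNumber]
  refine sum_congr rfl fun v hv ↦ ?_
  rw [coeff_one_sub_X_pow, coeff_mk, Nat.cast_sub (mem_range_succ_iff.mp hv)]

theorem eulerianNumber_eq_coeff (m j : ℕ) :
    eulerianNumber m j = (∑ n ∈ range (m + 1), Polynomial.C ((n ! : ℂ) * stirling2 m n) *
      Polynomial.X ^ n * (1 - Polynomial.X) ^ (m - n)).coeff j := by
  rw [← coeff_one_sub_X_pow_mul_mk_pow, one_sub_X_pow_mul_mk_pow, ← Polynomial.coeff_coe,
    ← Polynomial.coeToPowerSeries.ringHom_apply]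
  simp only [map_sum, map_mul, map_pow, map_sub, map_one,
    Polynomial.coeToPowerSeries.ringHom_apply, Polynomial.coe_C, Polynomial.coe_X]

theorem eulerianPoly_eq_sum_stirling2 (m : ℕ) (ρ : ℂ) :
    eulerianPoly m ρ = ∑ n ∈ range (m + 1), n ! * stirling2 m n * ρ ^ n * (1 - ρ) ^ (m - n) := by
  have hdeg : (∑ n ∈ range (m + 1), Polynomial.C ((n ! : ℂ) * stirling2 m n) *
      Polynomial.X ^ n * (1 - Polynomial.X) ^ (m - n)).natDegree < m + 1 := by
    refine Nat.lt_succ_of_le (Polynomial.natDegree_sum_le_of_forall_le _ _ fun n hn ↦ ?_)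
    calc _ ≤ n + (m - n) := by compute_degree
      _ = m := Nat.add_sub_cancel' (mem_range_succ_iff.mp hn)
  simp_rw [eulerianPoly, eulerianNumber_eq_coeff, ← Polynomial.eval_eq_sum_range' hdeg]
  simp [Polynomial.eval_finsetSum]

theorem stmt5 (m : ℕ) (hm : 0 < m) (ρ : ℂ) (hρ : ρ ≠ 1) :
    eulerianPoly m ρ =
      ∑ n ∈ Finset.Icc 1 m, (ρ / (1 - ρ)) ^ n * (n ! : ℂ) * (1 - ρ) ^ m * stirling2 m n := by
  have hρ' : 1 - ρ ≠ 0 := sub_ne_zero.mpr hρ.symm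
  rw [eulerianPoly_eq_sum_stirling2, range_eq_Ico, sum_eq_sum_Ico_succ_bot (Nat.succ_pos m),
    stirling2_zero_right_s5 hm.ne', mul_zero, zero_mul, zero_mul, zero_add]
  refine sum_congr (Ico_add_one_right_eq_Icc 1 m) fun n hn ↦ ?_
  have hsplit : (1 - ρ) ^ m = (1 - ρ) ^ n * (1 - ρ) ^ (m - n) := by
    rw [← pow_add, Nat.add_sub_cancel' (mem_Icc.mp hn).2]
  rw [hsplit, div_pow]
  field_simp
end

section
/- Let m be a positive integer and let ρ be a complex number. Then the Eulerian polynomial satisfies A_m(ρ) = Σ_{n=1}^{m} (n!/C(m,n)) · B_n^m(ρ) · S₂(m,n), where B_n^m(ρ) = C(m,n) ρ^n (1−ρ)^{m−n} is the Bernstein basis function. -/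
open Finset Nat

/-- The Bernstein basis functions `B_d^k(ω) = C(k,d) ω^d (1−ω)^{k−d}` for `0 ≤ d ≤ k`,
and `0` otherwise. -/
noncomputable def bernsteinC (k d : ℕ) (ω : ℂ) : ℂ :=
  if d ≤ k then (k.choose d : ℂ) * ω ^ d * (1 - ω) ^ (k - d) else 0

/-!
Expanding `n! S₂(m,n) = ∑ₖ (-1)^(n-k) C(n,k) k^m` (the coefficients of `(eᵗ - 1)ⁿ`) and
`A_{m,j}` alike, both sides become `∑ₖ k^m ρ^k · Pₖ(ρ)`. With `x = -ρ` and `r = m - k`,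
matching the polynomials `Pₖ` is the identity
`∑_{w ≤ r} C(k+r+1, w) xʷ = ∑_{w ≤ r} C(k+w, k) xʷ (1+x)^(r-w)`,
which holds because both sides satisfy `f(r+1) = (1+x) f(r) + C(k+r+1, k) x^(r+1)` by Pascal's rule.
-/

theorem PowerSeries.coeff_exp_sub_one_pow {A : Type*} [CommRing A] [Algebra ℚ A] (m n : ℕ) :
    coeff m ((exp A - 1) ^ n) = algebraMap ℚ A (1 / m !) *
      ∑ k ∈ range (n + 1), (-1 : A) ^ (n - k) * (n.choose k : A) * (k : A) ^ m := by
  rw [sub_eq_add_neg, add_pow, map_sum, mul_sum]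
  refine sum_congr rfl fun k _ => ?_
  have hC : (-1 : PowerSeries A) ^ (n - k) * (n.choose k : PowerSeries A) =
      C ((-1 : A) ^ (n - k) * n.choose k) := by
    simp
  rw [mul_assoc, hC, coeff_mul_C, exp_pow_eq_rescale_exp, coeff_rescale, coeff_exp]
  ring

theorem factorial_mul_stirling2_s6 (m n : ℕ) :
    (n ! : ℂ) * stirling2 m n =
      ∑ k ∈ range (n + 1), (-1 : ℂ) ^ (n - k) * (n.choose k : ℂ) * (k : ℂ) ^ m := by
  have : (n ! : ℂ) ≠ 0 := by exact_mod_cast n.factorial_ne_zero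
  have : (m ! : ℂ) ≠ 0 := by exact_mod_cast m.factorial_ne_zero
  rw [stirling2, PowerSeries.coeff_exp_sub_one_pow, map_div₀, map_one, map_natCast]
  field_simp

section TruncatedBinomial

variable {R : Type*} [CommSemiring R]

theorem one_add_mul_sum_range_choose_mul_pow (x : R) (N r : ℕ) :
    (1 + x) * ∑ w ∈ range (r + 1), (N.choose w : R) * x ^ w +
        (N.choose (r + 1) : R) * x ^ (r + 1) =
      ∑ w ∈ range (r + 2), ((N + 1).choose w : R) * x ^ w := by
  induction r with
  | zero => simp [sum_range_succ]; ring
  | succ r ih =>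
    rw [sum_range_succ _ (r + 2), ← ih, sum_range_succ, Nat.choose_succ_succ' N (r + 1)]
    push_cast
    ring

theorem sum_range_choose_mul_pow_eq_sum_choose_mul_pow_mul_one_add_pow (x : R) (u r : ℕ) :
    ∑ w ∈ range (r + 1), ((u + r + 1).choose w : R) * x ^ w =
      ∑ w ∈ range (r + 1), ((u + w).choose u : R) * x ^ w * (1 + x) ^ (r - w) := by
  induction r with
  | zero => simp
  | succ r ih =>
    have hsucc : ∀ w ∈ range (r + 1), ((u + w).choose u : R) * x ^ w * (1 + x) ^ (r + 1 - w) =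
        (1 + x) * (((u + w).choose u : R) * x ^ w * (1 + x) ^ (r - w)) := by
      intro w hw
      rw [Nat.sub_add_comm (Nat.lt_succ_iff.mp (mem_range.mp hw)), pow_succ]
      ring
    rw [← add_assoc, ← one_add_mul_sum_range_choose_mul_pow, ih,
      sum_range_succ (fun w => ((u + w).choose u : R) * x ^ w * (1 + x) ^ (r + 1 - w)),
      sum_congr rfl hsucc, ← mul_sum, Nat.sub_self, pow_zero, mul_one,
      show u + r + 1 = u + (r + 1) by ring, Nat.choose_symm_add]

end TruncatedBinomial

theorem sum_range_pow_mul_sum_choose_sub_mul_pow {R : Type*} [CommRing R] (m : ℕ) (x : R) :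
    ∑ n ∈ range (m + 1), x ^ n * (1 - x) ^ (m - n) *
        ∑ k ∈ range (n + 1), (-1 : R) ^ (n - k) * (n.choose k : R) * (k : R) ^ m =
      ∑ k ∈ range (m + 1), (k : R) ^ m * x ^ k *
        ∑ w ∈ range (m + 1 - k), ((k + w).choose k : R) * (-x) ^ w * (1 - x) ^ (m - k - w) := by
  simp_rw [mul_sum]
  rw [← sum_range_diag_flip]
  refine sum_congr rfl fun n _ => sum_congr rfl fun k hk => ?_
  have hkn : k + (n - k) = n := Nat.add_sub_cancel' (Nat.lt_succ_iff.mp (mem_range.mp hk))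
  rw [Nat.sub_sub, hkn, neg_pow, Nat.choose_symm_of_eq_add hkn.symm, ← hkn, pow_add,
    Nat.add_sub_cancel_left]
  ring

theorem eulerianNumber_mul_pow_eq_sum (m j : ℕ) (ρ : ℂ) :
    eulerianNumber m j * ρ ^ j =
      ∑ k ∈ range (j + 1),
        (k : ℂ) ^ m * ρ ^ k * (((m + 1).choose (j - k) : ℂ) * (-ρ) ^ (j - k)) := by
  rw [eulerianNumber, sum_mul, ← sum_range_reflect]
  refine sum_congr rfl fun k hk => ?_
  have hkj : k ≤ j := Nat.lt_succ_iff.mp (mem_range.mp hk)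
  rw [Nat.add_sub_cancel, Nat.cast_sub hkj, sub_sub_cancel, neg_pow,
    ← Nat.add_sub_cancel' hkj, pow_add, Nat.add_sub_cancel_left]
  ring

theorem eulerianPoly_eq_sum (m : ℕ) (ρ : ℂ) :
    eulerianPoly m ρ = ∑ k ∈ range (m + 1), (k : ℂ) ^ m * ρ ^ k *
      ∑ w ∈ range (m + 1 - k), ((m + 1).choose w : ℂ) * (-ρ) ^ w := by
  simp_rw [eulerianPoly, eulerianNumber_mul_pow_eq_sum, mul_sum]
  exact sum_range_diag_flip (m + 1) fun k w =>
    (k : ℂ) ^ m * ρ ^ k * (((m + 1).choose w : ℂ) * (-ρ) ^ w)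

theorem factorial_div_choose_mul_bernsteinC_mul_stirling2 {m n : ℕ} (hnm : n ≤ m) (ρ : ℂ) :
    ((n ! : ℂ) / (m.choose n : ℂ)) * bernsteinC m n ρ * stirling2 m n =
      ρ ^ n * (1 - ρ) ^ (m - n) *
        ∑ k ∈ range (n + 1), (-1 : ℂ) ^ (n - k) * (n.choose k : ℂ) * (k : ℂ) ^ m := by
  have : (m.choose n : ℂ) ≠ 0 := by exact_mod_cast (Nat.choose_pos hnm).ne'
  rw [bernsteinC, if_pos hnm, ← factorial_mul_stirling2_s6]
  field_simp

theorem stmt6 (m : ℕ) (hm : 0 < m) (ρ : ℂ) :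
    eulerianPoly m ρ =
      ∑ n ∈ Finset.Icc 1 m, ((n ! : ℂ) / (m.choose n : ℂ)) * bernsteinC m n ρ * stirling2 m n := by
  have hbernstein :
      ∑ n ∈ Icc 1 m, ((n ! : ℂ) / (m.choose n : ℂ)) * bernsteinC m n ρ * stirling2 m n =
      ∑ n ∈ range (m + 1), ρ ^ n * (1 - ρ) ^ (m - n) *
        ∑ k ∈ range (n + 1), (-1 : ℂ) ^ (n - k) * (n.choose k : ℂ) * (k : ℂ) ^ m := by
    rw [range_eq_Ico, sum_eq_sum_Ico_succ_bot m.succ_pos, ← Ico_add_one_right_eq_Icc]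
    simp only [sum_range_one, Nat.cast_zero, zero_pow hm.ne', mul_zero, zero_add,
      Nat.succ_eq_add_one]
    exact sum_congr rfl fun n hn =>
      factorial_div_choose_mul_bernsteinC_mul_stirling2 (Nat.lt_succ_iff.mp (mem_Ico.mp hn).2) ρ
  rw [hbernstein, sum_range_pow_mul_sum_choose_sub_mul_pow, eulerianPoly_eq_sum]
  refine sum_congr rfl fun k hk => ?_
  have hkm : k + (m - k) + 1 = m + 1 := by have := mem_range.mp hk; omega
  rw [Nat.sub_add_comm (Nat.lt_succ_iff.mp (mem_range.mp hk)), ← hkm,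
    sum_range_choose_mul_pow_eq_sum_choose_mul_pow_mul_one_add_pow, sub_eq_add_neg]
end

section
/- Let n be a positive integer and let ρ be a complex number with ρ ≠ 0 and ρ ≠ 1. Then the Eulerian polynomial satisfies A_n(ρ) = ρ·(1−ρ)^n · Σ_{j=0}^{n} C(n,j) · H_j(1/ρ), where H_j are the Euler-Frobenius numbers. -/
open Finset Nat

/-- The Euler-Frobenius numbers `H_n(q)`, defined by the generating function
`(1-q)/(e^t - q) = Σ_{n≥0} H_n(q) t^n/n!` (as a formal power series). -/
noncomputable def eulerFrobenius (n : ℕ) (q : ℂ) : ℂ :=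
  (n ! : ℂ) * PowerSeries.coeff n
    ((1 - q) • (PowerSeries.exp ℂ - PowerSeries.C q)⁻¹)

/-!
Both sides are expanded in the numbers `D(n, m) = Δᵐ xⁿ |ₓ₌₀ = m! S(n, m)`.
Writing `(1 - q)/(eᵗ - q) = 1/(1 + (eᵗ - 1)/(1 - q))` as a geometric series and using
`n! [tⁿ] (eᵗ - 1)ᵐ = D(n, m)` gives `H_n(q) = Σₘ (-1/(1 - q))ᵐ D(n, m)`, and the binomial
transform `Σⱼ C(n, j) D(j, m) = Δᵐ (x + 1)ⁿ |ₓ₌₀` equals `D(n, m) + D(n, m + 1)`.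
On the other side, Frobenius' formula `A_n(ρ) = Σₘ D(n, m) ρᵐ (1 - ρ)ⁿ⁻ᵐ` holds. For `q = 1/ρ`
one has `-1/(1 - q) = ρ/(1 - ρ)`, and the two expansions agree after the shift `m ↦ m + 1`,
because `D(n, 0) = D(n, n + 1) = 0` for `n > 0`.
-/

open fwdDiff PowerSeries

section FwdDiffPow

variable (R : Type*) [CommRing R]

/-- `m!` times the Stirling number of the second kind `S(n, m)`. -/
def fwdDiffPow (n m : ℕ) : R := Δ_[1] ^[m] (fun k : ℕ ↦ (k : R) ^ n) 0

variable {R}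

theorem fwdDiffPow_eq_sum (n m : ℕ) :
    fwdDiffPow R n m = ∑ k ∈ range (m + 1), (-1) ^ (m - k) * m.choose k * (k : R) ^ n := by
  simp [fwdDiffPow, fwdDiff_iter_eq_sum_shift]

theorem fwdDiffPow_eq_zero_of_lt {n m : ℕ} (h : n < m) : fwdDiffPow R n m = 0 := by
  have := congrFun (fwdDiff_iter_pow_eq_zero_of_lt (R := R) h) 0
  simpa [fwdDiff_iter_eq_sum_shift, fwdDiffPow] using this

theorem fwdDiffPow_zero_right {n : ℕ} (hn : n ≠ 0) : fwdDiffPow R n 0 = 0 := by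
  simp [fwdDiffPow, hn]

theorem sum_choose_mul_fwdDiffPow (n m : ℕ) :
    ∑ j ∈ range (n + 1), (n.choose j : R) * fwdDiffPow R j m =
      fwdDiffPow R n m + fwdDiffPow R n (m + 1) := by
  have hbinom : (fun k : ℕ ↦ ((k + 1 : ℕ) : R) ^ n) =
      ∑ j ∈ range (n + 1), n.choose j • fun k : ℕ ↦ (k : R) ^ j := by
    ext k
    simp [add_pow, mul_comm]
  calc ∑ j ∈ range (n + 1), (n.choose j : R) * fwdDiffPow R j m
      = Δ_[1] ^[m] (fun k : ℕ ↦ ((k + 1 : ℕ) : R) ^ n) 0 := by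
        rw [hbinom, fwdDiff_iter_finsetSum, Finset.sum_apply]
        simp only [fwdDiff_iter_const_smul, Pi.smul_apply, fwdDiffPow]
        simp only [nsmul_eq_mul]
    _ = Δ_[1] ^[m] (fun k : ℕ ↦ (k : R) ^ n) 1 := by
        rw [fwdDiff_iter_comp_add (f := fun k : ℕ ↦ (k : R) ^ n), zero_add]
    _ = fwdDiffPow R n m + fwdDiffPow R n (m + 1) := by
        rw [fwdDiffPow, fwdDiffPow, Function.iterate_succ_apply', fwdDiff, zero_add,
          add_sub_cancel]

theorem sum_fwdDiffPow_add_succ_mul_pow {n : ℕ} (hn : n ≠ 0) (r : R) :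
    r * ∑ m ∈ range (n + 1), r ^ m * (fwdDiffPow R n m + fwdDiffPow R n (m + 1)) =
      (r + 1) * ∑ m ∈ range (n + 1), fwdDiffPow R n m * r ^ m := by
  have hshift := (sum_range_succ' (fun m ↦ fwdDiffPow R n m * r ^ m) (n + 1)).symm.trans
    (sum_range_succ _ _)
  simp only [fwdDiffPow_zero_right hn, fwdDiffPow_eq_zero_of_lt n.lt_succ_self, zero_mul,
    add_zero] at hshift
  rw [add_mul, one_mul, mul_sum, mul_sum, ← hshift, ← sum_add_distrib]
  exact sum_congr rfl fun m _ ↦ by ring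

theorem factorial_mul_coeff_exp_sub_one_pow [Algebra ℚ R] (n m : ℕ) :
    (n ! : R) * coeff n ((exp R - 1) ^ m) = fwdDiffPow R n m := by
  have hexp (k : ℕ) : (n ! : R) * coeff n (exp R ^ k) = (k : R) ^ n := by
    rw [exp_pow_eq_rescale_exp, coeff_rescale, coeff_exp, mul_left_comm,
      ← map_natCast (algebraMap ℚ R) n !, ← map_mul, one_div,
      mul_inv_cancel₀ (by positivity), map_one, mul_one]
  rw [fwdDiffPow_eq_sum, sub_eq_add_neg, add_pow, map_sum, mul_sum]
  refine sum_congr rfl fun k _ ↦ ?_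
  have hC : exp R ^ k * (-1) ^ (m - k) * (m.choose k : R⟦X⟧) =
      C ((-1) ^ (m - k) * m.choose k : R) * exp R ^ k := by
    simp only [map_mul, map_pow, map_neg, map_one, map_natCast]
    ring
  rw [hC, coeff_C_mul, mul_left_comm, hexp]

end FwdDiffPow

theorem PowerSeries.coeff_inv_one_sub_eq_coeff_geom_sum {k : Type*} [Field k] {w : k⟦X⟧}
    (hw : constantCoeff w = 0) {n N : ℕ} (h : n ≤ N) :
    coeff n (1 - w)⁻¹ = coeff n (∑ i ∈ range (N + 1), w ^ i) := by
  have hinv : (1 - w)⁻¹ * (1 - w) = 1 := PowerSeries.inv_mul_cancel _ (by simp [hw])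
  have hgeom := geom_sum_mul_neg w (N + 1)
  have htail : (1 - w)⁻¹ - ∑ i ∈ range (N + 1), w ^ i = (1 - w)⁻¹ * w ^ (N + 1) := by
    linear_combination (∑ i ∈ range (N + 1), w ^ i) * hinv - (1 - w)⁻¹ * hgeom
  have hdvd : X ^ (N + 1) ∣ (1 - w)⁻¹ * w ^ (N + 1) :=
    (pow_dvd_pow_of_dvd (X_dvd_iff.mpr hw) _).mul_left _
  rw [← sub_eq_zero, ← map_sub, htail]
  exact X_pow_dvd_iff.mp hdvd n (by omega)

theorem eulerFrobenius_eq_sum {q : ℂ} (hq : q ≠ 1) {n N : ℕ} (h : n ≤ N) :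
    eulerFrobenius n q = ∑ m ∈ range (N + 1), (-(1 - q)⁻¹) ^ m * fwdDiffPow ℂ n m := by
  have hc : 1 - q ≠ 0 := sub_ne_zero.mpr hq.symm
  set w : ℂ⟦X⟧ := (-(1 - q)⁻¹) • (exp ℂ - 1) with hw
  have hw0 : constantCoeff w = 0 := by simp [w]
  have hsplit : exp ℂ - C q = (1 - q) • (1 - w) := by
    rw [hw, smul_sub, smul_smul, mul_neg, mul_inv_cancel₀ hc, smul_eq_C_mul, map_sub, map_one]
    simp only [neg_smul, one_smul]
    ring
  have hinv : (1 - q) • (exp ℂ - C q)⁻¹ = (1 - w)⁻¹ := by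
    rw [hsplit, PowerSeries.smul_inv, smul_smul, mul_inv_cancel₀ hc, one_smul]
  rw [eulerFrobenius, hinv, coeff_inv_one_sub_eq_coeff_geom_sum hw0 h, map_sum, mul_sum]
  refine sum_congr rfl fun m _ ↦ ?_
  rw [hw, smul_pow, coeff_smul, ← factorial_mul_coeff_exp_sub_one_pow, smul_eq_mul]
  ring

theorem sum_choose_mul_eulerFrobenius {q : ℂ} (hq : q ≠ 1) (n : ℕ) :
    ∑ j ∈ range (n + 1), (n.choose j : ℂ) * eulerFrobenius j q =
      ∑ m ∈ range (n + 1),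
        (-(1 - q)⁻¹) ^ m * (fwdDiffPow ℂ n m + fwdDiffPow ℂ n (m + 1)) := by
  simp only [← sum_choose_mul_fwdDiffPow, mul_sum]
  rw [sum_comm]
  refine sum_congr rfl fun j hj ↦ ?_
  rw [eulerFrobenius_eq_sum hq (Nat.lt_succ_iff.mp (mem_range.mp hj)), mul_sum]
  exact sum_congr rfl fun m _ ↦ by ring

section BinomConv

variable {R : Type*} [CommRing R] (f : ℕ → R)

/-- The `j`-th coefficient of `(1 - X) ^ (n + 1) * ∑ k, f k * X ^ k`. -/
def binomConv (n j : ℕ) : R := ∑ v ∈ range (j + 1), (-1) ^ v * (n + 1).choose v * f (j - v)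

theorem binomConv_zero_right (n : ℕ) : binomConv f n 0 = f 0 := by
  simp [binomConv]

theorem binomConv_succ_succ (n j : ℕ) :
    binomConv f (n + 1) (j + 1) = binomConv f n (j + 1) - binomConv f n j := by
  simp only [binomConv, sum_range_succ' _ (j + 1), Nat.add_sub_add_right,
    Nat.choose_succ_succ' (n + 1)]
  rw [eq_sub_iff_add_eq, add_right_comm, ← sum_add_distrib]
  congr 1
  refine sum_congr rfl fun v _ ↦ ?_
  push_cast
  ring

theorem binomConv_succ_self (n : ℕ) : binomConv f n (n + 1) = Δ_[1] ^[n + 1] f 0 := by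
  rw [binomConv, fwdDiff_iter_eq_sum_shift, ← sum_range_reflect]
  refine sum_congr rfl fun v hv ↦ ?_
  have hv : v ≤ n + 1 := Nat.lt_succ_iff.mp (mem_range.mp hv)
  rw [Nat.add_sub_cancel, Nat.choose_symm hv, Nat.sub_sub_self hv, zsmul_eq_mul]
  simp

theorem sum_binomConv_mul_pow_succ (n : ℕ) (x : R) :
    ∑ j ∈ range (n + 2), binomConv f (n + 1) j * x ^ j =
      (1 - x) * ∑ j ∈ range (n + 1), binomConv f n j * x ^ j +
        binomConv f n (n + 1) * x ^ (n + 1) := by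
  have hshift : ∑ j ∈ range (n + 1), binomConv f n (j + 1) * x ^ (j + 1) + binomConv f n 0 =
      ∑ j ∈ range (n + 1), binomConv f n j * x ^ j + binomConv f n (n + 1) * x ^ (n + 1) := by
    simpa using (sum_range_succ' (fun j ↦ binomConv f n j * x ^ j) (n + 1)).symm.trans
      (sum_range_succ _ _)
  have hmul : ∑ j ∈ range (n + 1), binomConv f n j * x ^ (j + 1) =
      x * ∑ j ∈ range (n + 1), binomConv f n j * x ^ j := by
    rw [mul_sum]
    exact sum_congr rfl fun j _ ↦ by ring
  rw [sum_range_succ', binomConv_zero_right, ← binomConv_zero_right f n]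
  simp only [binomConv_succ_succ, sub_mul, sum_sub_distrib, pow_zero, mul_one]
  linear_combination hshift - hmul

/-- Frobenius' formula, for an arbitrary sequence `f` in place of `k ↦ kⁿ`. -/
theorem sum_binomConv_mul_pow (n : ℕ) (x : R) :
    ∑ j ∈ range (n + 1), binomConv f n j * x ^ j =
      ∑ m ∈ range (n + 1), Δ_[1] ^[m] f 0 * x ^ m * (1 - x) ^ (n - m) := by
  induction n with
  | zero => simp [binomConv]
  | succ n ih =>
    rw [sum_binomConv_mul_pow_succ, ih, binomConv_succ_self, sum_range_succ _ (n + 1), mul_sum,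
      Nat.sub_self, pow_zero, mul_one]
    congr 1
    refine sum_congr rfl fun m hm ↦ ?_
    rw [Nat.sub_add_comm (Nat.lt_succ_iff.mp (mem_range.mp hm)), pow_succ]
    ring

end BinomConv

theorem eulerianNumber_eq_binomConv (n j : ℕ) :
    eulerianNumber n j = binomConv (fun k : ℕ ↦ (k : ℂ) ^ n) n j :=
  sum_congr rfl fun v hv ↦ by
    dsimp only
    rw [Nat.cast_sub (Nat.lt_succ_iff.mp (mem_range.mp hv))]

theorem eulerianPoly_eq_sum_fwdDiffPow (n : ℕ) (ρ : ℂ) :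
    eulerianPoly n ρ = ∑ m ∈ range (n + 1), fwdDiffPow ℂ n m * ρ ^ m * (1 - ρ) ^ (n - m) := by
  simp only [eulerianPoly, eulerianNumber_eq_binomConv]
  exact sum_binomConv_mul_pow _ n ρ

theorem stmt7 (n : ℕ) (hn : 0 < n) (ρ : ℂ) (hρ0 : ρ ≠ 0) (hρ1 : ρ ≠ 1) :
    eulerianPoly n ρ =
      ρ * (1 - ρ) ^ n *
        ∑ j ∈ Finset.range (n + 1), (n.choose j : ℂ) * eulerFrobenius j (1 / ρ) := by
  have hc : 1 - ρ ≠ 0 := sub_ne_zero.mpr hρ1.symm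
  have hq : 1 / ρ ≠ 1 := by rwa [ne_eq, div_eq_one_iff_eq hρ0, eq_comm]
  have hrq : -(1 - 1 / ρ)⁻¹ = ρ / (1 - ρ) := by field_simp; ring
  have hρr : ρ = (1 - ρ) * (ρ / (1 - ρ)) := by field_simp
  have hr1 : (1 - ρ) * (ρ / (1 - ρ) + 1) = 1 := by field_simp; ring
  rw [sum_choose_mul_eulerFrobenius hq, hrq]
  generalize ρ / (1 - ρ) = r at hρr hr1 ⊢
  set S := ∑ m ∈ range (n + 1), fwdDiffPow ℂ n m * r ^ m
  set T := ∑ m ∈ range (n + 1), r ^ m * (fwdDiffPow ℂ n m + fwdDiffPow ℂ n (m + 1))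
  have hST : S = ρ * T := by
    linear_combination (-T) * hρr - (1 - ρ) * sum_fwdDiffPow_add_succ_mul_pow hn.ne' r - S * hr1
  rw [mul_right_comm, ← hST, eulerianPoly_eq_sum_fwdDiffPow, sum_mul]
  refine sum_congr rfl fun m hm ↦ ?_
  rw [← pow_sub_mul_pow _ (Nat.lt_succ_iff.mp (mem_range.mp hm)),
    show ρ ^ m = (1 - ρ) ^ m * r ^ m by rw [← mul_pow, ← hρr]]
  ring
end

section
/- Let n be a positive integer, let ρ be a complex number with ρ ≠ 1, and let ω be any complex number. Then Σ_{j=1}^{n} (−1)^{j+1} · C(n,j) · j · (ρ−1)^{−j} · A_{j−1}(ρ) · ( ρ(ω+1)^{n−j} − ω^{n−j} ) = n·ω^{n−1}. -/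
open Finset Nat

/-! As formal power series `A_p(X) = (1 - X)^(p+1) ∑ₖ k^p X^k`, the right-hand side being a
polynomial because the `(p+1)`-st finite difference of `k ↦ k^p` vanishes. Multiplied by
`(1 - ρ)^n`, the theorem becomes a polynomial identity in `ρ`. In power series, the identity
`∑ⱼ C(n,j) j k^(j-1) x^(n-j) = n (k + x)^(n-1)` turns its left-hand side into
`n ∑ₖ (X (k + ω + 1)^(n-1) - (k + ω)^(n-1)) X^k`, which telescopes to `-n ω^(n-1)`. -/

theorem sum_range_neg_one_pow_mul_choose_mul_sub_pow_eq_zero {R : Type*} [CommRing R]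
    {p m : ℕ} (h : p < m) (c : R) :
    ∑ v ∈ range (m + 1), (-1 : R) ^ v * m.choose v * (c - v) ^ p = 0 := by
  have hdiff := congr_fun (fwdDiff_iter_pow_eq_zero_of_lt (R := R) h) (c - m)
  rw [fwdDiff_iter_eq_sum_shift, ← sum_range_reflect, Pi.zero_apply] at hdiff
  rw [← hdiff]
  refine sum_congr rfl fun v hv => ?_
  have hv : v ≤ m := Nat.lt_succ_iff.mp (mem_range.mp hv)
  rw [Nat.add_sub_cancel, Nat.sub_sub_self hv, Nat.choose_symm hv, nsmul_one, Nat.cast_sub hv]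
  simp only [zsmul_eq_mul]
  push_cast
  ring

theorem eulerianNumber_eq_zero_of_lt {p i : ℕ} (h : p < i) : eulerianNumber p i = 0 := by
  rw [eulerianNumber, ← sum_subset (range_subset_range.mpr (by omega : p + 1 + 1 ≤ i + 1)),
    sum_range_neg_one_pow_mul_choose_mul_sub_pow_eq_zero (Nat.lt_succ_self p)]
  intro v _ hv
  rw [Nat.choose_eq_zero_of_lt (by simpa using hv), Nat.cast_zero, mul_zero, zero_mul]

theorem sum_Icc_choose_mul_mul_pow_mul_pow {R : Type*} [CommRing R] (n : ℕ) (x y : R) :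
    ∑ j ∈ Icc 1 n, (n.choose j * j : R) * x ^ (j - 1) * y ^ (n - j) = n * (x + y) ^ (n - 1) := by
  cases n with
  | zero => simp
  | succ m =>
    rw [← Finset.Ico_add_one_right_eq_Icc, sum_Ico_eq_sum_range, add_pow, mul_sum]
    refine sum_congr (by simp) fun i _ => ?_
    have hchoose :
        ((m + 1).choose (1 + i) : R) * ((1 + i : ℕ) : R) = ((m + 1 : ℕ) : R) * m.choose i := by
      rw [add_comm 1 i]
      exact_mod_cast congrArg (Nat.cast (R := R)) (Nat.add_one_mul_choose_eq m i).symm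
    rw [hchoose, Nat.add_sub_cancel_left, show m + 1 - (1 + i) = m - i by omega,
      Nat.add_sub_cancel]
    ring

namespace PowerSeries

variable {R : Type*} [CommRing R]

theorem coeff_one_sub_X_pow_s9 (m a : ℕ) :
    coeff a ((1 - X : R⟦X⟧) ^ m) = (-1) ^ a * m.choose a := by
  have hrescale : (1 - X : R⟦X⟧) ^ m = rescale (-1) ((1 + Polynomial.X : Polynomial R) ^ m) := by
    simp [sub_eq_add_neg]
  rw [hrescale, coeff_rescale, Polynomial.coeff_coe, Polynomial.coeff_one_add_X_pow]

theorem coeff_one_sub_X_pow_mul (m i : ℕ) (f : R⟦X⟧) :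
    coeff i ((1 - X) ^ m * f) = ∑ v ∈ range (i + 1), (-1) ^ v * m.choose v * coeff (i - v) f := by
  rw [coeff_mul, Finset.Nat.sum_antidiagonal_eq_sum_range_succ
    (fun a b => coeff a ((1 - X : R⟦X⟧) ^ m) * coeff b f)]
  simp only [coeff_one_sub_X_pow_s9]

theorem mk_eq_X_mul_mk_succ_add_C (f : ℕ → R) :
    mk f = X * mk (fun k => f (k + 1)) + C (f 0) := by
  simpa using eq_X_mul_shift_add_const (mk f)

theorem sum_Icc_C_mul_mk_pow (n : ℕ) (c : R) :
    ∑ j ∈ Icc 1 n, C (n.choose j * j * c ^ (n - j) : R) * mk (fun k => (k : R) ^ (j - 1)) =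
      C (n : R) * mk fun k => ((k : R) + c) ^ (n - 1) := by
  ext k
  simp only [map_sum, coeff_C_mul, coeff_mk, ← sum_Icc_choose_mul_mul_pow_mul_pow]
  exact sum_congr rfl fun j _ => by ring

theorem sum_Icc_C_mul_mk_pow_mul_X_sub_eq_neg_C (n : ℕ) (c : R) :
    ∑ j ∈ Icc 1 n, C (n.choose j * j : R) * mk (fun k => (k : R) ^ (j - 1)) *
        (X * C ((c + 1) ^ (n - j)) - C (c ^ (n - j))) = -C (n * c ^ (n - 1)) := by
  have hsplit : ∀ j ∈ Icc 1 n, C (n.choose j * j : R) * mk (fun k => (k : R) ^ (j - 1)) *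
        (X * C ((c + 1) ^ (n - j)) - C (c ^ (n - j))) =
      X * (C (n.choose j * j * (c + 1) ^ (n - j)) * mk fun k => (k : R) ^ (j - 1)) -
        C (n.choose j * j * c ^ (n - j)) * mk fun k => (k : R) ^ (j - 1) := by
    intro j _
    simp only [map_mul]
    ring
  have htelescope : (mk fun k => ((k : R) + c) ^ (n - 1)) =
      X * (mk fun k => ((k : R) + (c + 1)) ^ (n - 1)) + C (c ^ (n - 1)) := by
    rw [mk_eq_X_mul_mk_succ_add_C]
    push_cast
    simp only [add_assoc, add_comm (1 : R) c, zero_add]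
  rw [sum_congr rfl hsplit, sum_sub_distrib, ← mul_sum, sum_Icc_C_mul_mk_pow,
    sum_Icc_C_mul_mk_pow, htelescope, map_mul]
  ring

end PowerSeries

open Polynomial

noncomputable def eulerianPolynomial (p : ℕ) : ℂ[X] :=
  ∑ i ∈ range (p + 1), C (eulerianNumber p i) * X ^ i

theorem eval_eulerianPolynomial (p : ℕ) (ρ : ℂ) :
    (eulerianPolynomial p).eval ρ = eulerianPoly p ρ := by
  simp [eulerianPolynomial, eulerianPoly, eval_finsetSum]

theorem coeff_eulerianPolynomial (p i : ℕ) :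
    (eulerianPolynomial p).coeff i = eulerianNumber p i := by
  simp only [eulerianPolynomial, finsetSum_coeff, coeff_C_mul_X_pow]
  rw [sum_ite_eq]
  split_ifs with h
  · rfl
  · exact (eulerianNumber_eq_zero_of_lt (by simpa using h)).symm

theorem coe_eulerianPolynomial (p : ℕ) :
    (eulerianPolynomial p : PowerSeries ℂ) =
      (1 - PowerSeries.X) ^ (p + 1) * PowerSeries.mk fun k => (k : ℂ) ^ p := by
  ext i
  rw [coeff_coe, coeff_eulerianPolynomial, PowerSeries.coeff_one_sub_X_pow_mul, eulerianNumber]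
  refine sum_congr rfl fun v hv => ?_
  rw [PowerSeries.coeff_mk, Nat.cast_sub (Nat.lt_succ_iff.mp (mem_range.mp hv))]

theorem sum_Icc_C_mul_one_sub_X_pow_mul_eulerianPolynomial (n : ℕ) (ω : ℂ) :
    ∑ j ∈ Icc 1 n, C (n.choose j * j : ℂ) * (1 - X) ^ (n - j) * eulerianPolynomial (j - 1) *
        (X * C ((ω + 1) ^ (n - j)) - C (ω ^ (n - j))) = -C (n * ω ^ (n - 1)) * (1 - X) ^ n := by
  apply Polynomial.coe_injective
  have hterm : ∀ j ∈ Icc 1 n,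
      ((C (n.choose j * j : ℂ) * (1 - X) ^ (n - j) * eulerianPolynomial (j - 1) *
        (X * C ((ω + 1) ^ (n - j)) - C (ω ^ (n - j))) : ℂ[X]) : PowerSeries ℂ) =
      (1 - PowerSeries.X) ^ n * (PowerSeries.C (n.choose j * j : ℂ) *
        (PowerSeries.mk fun k => (k : ℂ) ^ (j - 1)) *
        (PowerSeries.X * PowerSeries.C ((ω + 1) ^ (n - j)) - PowerSeries.C (ω ^ (n - j)))) := by
    intro j hj
    have hj := mem_Icc.mp hj
    rw [← pow_sub_mul_pow (1 - PowerSeries.X) hj.2]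
    simp only [Polynomial.coe_mul, Polynomial.coe_pow, Polynomial.coe_sub, Polynomial.coe_one,
      coe_X, coe_C, coe_eulerianPolynomial, Nat.sub_add_cancel hj.1]
    ring
  rw [← coeToPowerSeries.ringHom_apply, map_sum]
  simp only [coeToPowerSeries.ringHom_apply]
  rw [sum_congr rfl hterm, ← mul_sum, PowerSeries.sum_Icc_C_mul_mk_pow_mul_X_sub_eq_neg_C]
  simp only [Polynomial.coe_mul, Polynomial.coe_pow, Polynomial.coe_sub, Polynomial.coe_one,
    Polynomial.coe_neg, coe_X, coe_C]
  ring

theorem stmt9_general (n : ℕ) (ρ : ℂ) (hρ : ρ ≠ 1) (ω : ℂ) :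
    ∑ j ∈ Finset.Icc 1 n,
        (-1 : ℂ) ^ (j + 1) * (n.choose j : ℂ) * (j : ℂ) * (ρ - 1) ^ (-(j : ℤ)) *
          eulerianPoly (j - 1) ρ * (ρ * (ω + 1) ^ (n - j) - ω ^ (n - j)) =
      (n : ℂ) * ω ^ (n - 1) := by
  have h1ρ : (1 : ℂ) - ρ ≠ 0 := sub_ne_zero.mpr hρ.symm
  have hpoly := congrArg (eval ρ) (sum_Icc_C_mul_one_sub_X_pow_mul_eulerianPolynomial n ω)
  simp only [eval_finsetSum, eval_mul, eval_sub, eval_pow, eval_one, eval_X, eval_C, eval_neg,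
    eval_eulerianPolynomial] at hpoly
  have hterm : ∀ j ∈ Icc 1 n,
      (-1 : ℂ) ^ (j + 1) * (n.choose j : ℂ) * (j : ℂ) * (ρ - 1) ^ (-(j : ℤ)) *
          eulerianPoly (j - 1) ρ * (ρ * (ω + 1) ^ (n - j) - ω ^ (n - j)) =
        -((1 - ρ) ^ n)⁻¹ * ((n.choose j * j : ℂ) * (1 - ρ) ^ (n - j) * eulerianPoly (j - 1) ρ *
          (ρ * (ω + 1) ^ (n - j) - ω ^ (n - j))) := by
    intro j hj
    rw [zpow_neg, zpow_natCast, show ρ - 1 = -1 * (1 - ρ) by ring, mul_pow,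
      pow_sub₀ _ h1ρ (mem_Icc.mp hj).2]
    field_simp
    ring
  rw [sum_congr rfl hterm, ← mul_sum, hpoly]
  field_simp

theorem stmt9 (n : ℕ) (hn : 0 < n) (ρ : ℂ) (hρ : ρ ≠ 1) (ω : ℂ) :
    ∑ j ∈ Finset.Icc 1 n,
        (-1 : ℂ) ^ (j + 1) * (n.choose j : ℂ) * (j : ℂ) * (ρ - 1) ^ (-(j : ℤ)) *
          eulerianPoly (j - 1) ρ * (ρ * (ω + 1) ^ (n - j) - ω ^ (n - j)) =
      (n : ℂ) * ω ^ (n - 1) :=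
  stmt9_general n ρ hρ ω
end

section
/- Let n, p be nonnegative integers and let ω be a real number with p ≤ ω ≤ p+1. Then N_{0,n}(ω;p) = (1/n!) · Σ_{v=0}^{n} (−1)^v · C(n,v) · Σ_{j=0}^{p} ( B_j^v(ω−j) − B_{j−1}^v(ω−j) ). -/
/-!
Term by term in `j`, this is a polynomial identity in `x = ω - j`. Expanding
`B_d^v(x) = C(v,d) x^d (1-x)^(v-d)` and using `C(n,v) C(v,d) = C(n,d) C(n-d,v-d)`, the binomial
theorem collapses `Σ_v (-1)^v C(n,v) B_d^v(x)` to `(-1)^d C(n,d) x^n`. Subtracting the sums for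
`d = j - 1` from those for `d = j`, Pascal's rule gives `(-1)^j C(n+1,j) x^n`, the `j`-th term of
Schoenberg's formula.
-/

open Finset Nat

/-- The uniform B-spline basis (Schoenberg's identity):
`N_{0,n}(ω;p) = (1/n!) Σ_{j=0}^p (−1)^j C(n+1,j) (ω−j)^n`. -/
noncomputable def Nspline (n p : ℕ) (ω : ℝ) : ℝ :=
  (1 / (n ! : ℝ)) *
    ∑ j ∈ Finset.range (p + 1), (-1 : ℝ) ^ j * ((n + 1).choose j : ℝ) * (ω - j) ^ n

/-- The Bernstein basis functions `B_d^k(ω) = C(k,d) ω^d (1−ω)^{k−d}` for `0 ≤ d ≤ k`,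
and `0` otherwise (in particular for `d < 0`). -/
noncomputable def bern (k : ℕ) (d : ℤ) (ω : ℝ) : ℝ :=
  if 0 ≤ d ∧ d ≤ (k : ℤ) then (k.choose d.toNat : ℝ) * ω ^ d.toNat * (1 - ω) ^ (k - d.toNat)
  else 0

lemma bern_natCast (k d : ℕ) (x : ℝ) :
    bern k d x = if d ≤ k then (k.choose d : ℝ) * x ^ d * (1 - x) ^ (k - d) else 0 := by
  simp [bern, Int.toNat_natCast]

lemma bern_of_lt {k d : ℕ} (h : k < d) (x : ℝ) : bern k d x = 0 := by
  rw [bern_natCast, if_neg (not_le.mpr h)]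

lemma bern_neg_one (k : ℕ) (x : ℝ) : bern k (-1) x = 0 := by
  simp [bern]

lemma bern_add_left (d u : ℕ) (x : ℝ) :
    bern (d + u) d x = ((d + u).choose d : ℝ) * x ^ d * (1 - x) ^ u := by
  rw [bern_natCast, if_pos (Nat.le_add_right d u), Nat.add_sub_cancel_left]

lemma sum_neg_one_pow_mul_choose_mul_bern (n d : ℕ) (x : ℝ) :
    ∑ v ∈ range (n + 1), (-1 : ℝ) ^ v * (n.choose v : ℝ) * bern v d x
      = (-1 : ℝ) ^ d * (n.choose d : ℝ) * x ^ n := by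
  rcases lt_or_ge n d with hnd | hdn
  · rw [Nat.choose_eq_zero_of_lt hnd, Nat.cast_zero, mul_zero, zero_mul]
    refine sum_eq_zero fun v hv => ?_
    rw [bern_of_lt (by rw [mem_range] at hv; omega), mul_zero]
  obtain ⟨m, rfl⟩ := Nat.exists_eq_add_of_le hdn
  have h_low : ∑ v ∈ range d, (-1 : ℝ) ^ v * ((d + m).choose v : ℝ) * bern v d x = 0 :=
    sum_eq_zero fun v hv => by rw [bern_of_lt (mem_range.mp hv), mul_zero]
  have h_term (u : ℕ) : (-1 : ℝ) ^ (d + u) * ((d + m).choose (d + u) : ℝ) * bern (d + u) d x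
      = (-1 : ℝ) ^ d * ((d + m).choose d : ℝ) * x ^ d * ((x - 1) ^ u * (m.choose u : ℝ)) := by
    have h_choose : ((d + m).choose (d + u) : ℝ) * ((d + u).choose d : ℝ)
        = ((d + m).choose d : ℝ) * (m.choose u : ℝ) := by
      exact_mod_cast (Nat.choose_mul (Nat.le_add_right d u)).trans (by simp)
    have h_sign : (x - 1) ^ u = (-1 : ℝ) ^ u * (1 - x) ^ u := by rw [← mul_pow]; ring
    rw [bern_add_left, pow_add, h_sign]
    linear_combination (-1 : ℝ) ^ d * (-1 : ℝ) ^ u * x ^ d * (1 - x) ^ u * h_choose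
  have h_binomial : ∑ u ∈ range (m + 1), (x - 1) ^ u * (m.choose u : ℝ) = x ^ m := by
    simpa using (add_pow (x - 1) 1 m).symm
  rw [show d + m + 1 = d + (m + 1) by ring, sum_range_add, h_low, zero_add]
  simp_rw [h_term]
  rw [← mul_sum, h_binomial, pow_add]
  ring

lemma sum_neg_one_pow_mul_choose_mul_bern_sub (n j : ℕ) (x : ℝ) :
    ∑ v ∈ range (n + 1), (-1 : ℝ) ^ v * (n.choose v : ℝ) * (bern v j x - bern v (j - 1) x)
      = (-1 : ℝ) ^ j * ((n + 1).choose j : ℝ) * x ^ n := by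
  simp_rw [mul_sub, sum_sub_distrib, sum_neg_one_pow_mul_choose_mul_bern]
  cases j with
  | zero => simp [bern_neg_one]
  | succ k =>
    rw [Nat.cast_succ, add_sub_cancel_right, sum_neg_one_pow_mul_choose_mul_bern,
      Nat.choose_succ_succ', Nat.cast_add, pow_succ]
    ring

theorem stmt14_general (n p : ℕ) (ω : ℝ) :
    Nspline n p ω =
      (1 / (n ! : ℝ)) *
        ∑ v ∈ Finset.range (n + 1), (-1 : ℝ) ^ v * (n.choose v : ℝ) *
          ∑ j ∈ Finset.range (p + 1),
            (bern v (j : ℤ) (ω - j) - bern v ((j : ℤ) - 1) (ω - j)) := by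
  rw [Nspline]
  congr 1
  calc ∑ j ∈ range (p + 1), (-1 : ℝ) ^ j * ((n + 1).choose j : ℝ) * (ω - j) ^ n
      = ∑ j ∈ range (p + 1), ∑ v ∈ range (n + 1), (-1 : ℝ) ^ v * (n.choose v : ℝ) *
          (bern v j (ω - j) - bern v (j - 1) (ω - j)) :=
        sum_congr rfl fun j _ => (sum_neg_one_pow_mul_choose_mul_bern_sub n j (ω - j)).symm
    _ = _ := by simp_rw [mul_sum]; exact sum_comm

theorem stmt14 (n p : ℕ) (ω : ℝ) (h1 : (p : ℝ) ≤ ω) (h2 : ω ≤ (p : ℝ) + 1) :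
    Nspline n p ω =
      (1 / (n ! : ℝ)) *
        ∑ v ∈ Finset.range (n + 1), (-1 : ℝ) ^ v * (n.choose v : ℝ) *
          ∑ j ∈ Finset.range (p + 1),
            (bern v (j : ℤ) (ω - j) - bern v ((j : ℤ) - 1) (ω - j)) :=
  stmt14_general n p ω
end

section
/- Let n, p, v be nonnegative integers and let ω be a real number with p ≤ ω ≤ p+1. Then N_{0,n+v}(ω;p) = (1/(n!·(n+v)_v)) · Σ_{d=0}^{n} (−1)^{v+d} · C(n,d) · Σ_{m=0}^{v} (−1)^{v−m} · C(v,m) · Σ_{j=0}^{p} Σ_{c=0}^{m} B_c^m(ω−j) · ( B_{j−c}^d(ω−j) − B_{j−c−1}^d(ω−j) ), where (n+v)_v = (n+v)!/n! denotes the falling factorial. -/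
open Finset Nat

/-!
`B_c^k(t)` is the coefficient of `X^c` in `q^k`, where `q = tX + (1 - t)`. So the sum over `c`
is the coefficient of `X^j` in `(1 - X) q^(m+d)`, and by the binomial theorem the signed sums over
`d` and `m` collapse to `(-1)^v (1 - q)^n (q - 1)^v = (t(1 - X))^(n+v)`. With `t = ω - j` the
`j`-th summand is therefore `(ω - j)^(n+v)` times the coefficient `(-1)^j C(n+v+1, j)` of `X^j` in
`(1 - X)^(n+v+1)`: the `j`-th term of Schoenberg's formula for `N_{0,n+v}`. The prefactor
`n! (n+v)_v` is `(n+v)!`.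
-/

open Polynomial

lemma Polynomial.coeff_C_mul_X_add_C_pow {R : Type*} [CommSemiring R] (a b : R) (k c : ℕ) :
    ((C a * X + C b) ^ k).coeff c = k.choose c * a ^ c * b ^ (k - c) := by
  have hterm : ∀ m, ((C a * X) ^ m * C b ^ (k - m) * (k.choose m : R[X])).coeff c =
      if c = m then k.choose m * a ^ m * b ^ (k - m) else 0 := by
    intro m
    rw [← coeff_C_mul_X_pow]
    congr 1
    simp only [map_mul, map_pow, map_natCast]
    ring
  rw [add_pow, finsetSum_coeff, sum_congr rfl fun m _ => hterm m, sum_ite_eq]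
  split_ifs with hc
  · rfl
  · rw [Nat.choose_eq_zero_of_lt (by simpa using hc), Nat.cast_zero, zero_mul, zero_mul]

lemma bern_of_neg (k : ℕ) {z : ℤ} (t : ℝ) (hz : z < 0) : bern k z t = 0 :=
  if_neg fun h => by omega

lemma bern_natCast_of_lt {k c : ℕ} (t : ℝ) (h : k < c) : bern k c t = 0 :=
  if_neg fun h' => by omega

lemma bern_natCast_s16 (k c : ℕ) (t : ℝ) :
    bern k c t = ((C t * X + C (1 - t)) ^ k).coeff c := by
  rw [coeff_C_mul_X_add_C_pow, bern]
  split_ifs with h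
  · rw [Int.toNat_natCast]
  · rw [Nat.choose_eq_zero_of_lt (by omega), Nat.cast_zero, zero_mul, zero_mul]

lemma sum_bern_mul_bern (m d : ℕ) (z : ℤ) (t : ℝ) :
    ∑ c ∈ range (m + 1), bern m c t * bern d (z - c) t = bern (m + d) z t := by
  rcases lt_or_ge z 0 with hz | hz
  · rw [bern_of_neg _ _ hz]
    exact sum_eq_zero fun c _ => by rw [bern_of_neg d t (by omega), mul_zero]
  obtain ⟨k, rfl⟩ := Int.eq_ofNat_of_zero_le hz
  calc ∑ c ∈ range (m + 1), bern m c t * bern d ((k : ℤ) - c) t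
      = ∑ c ∈ range (m + 1) ∩ range (k + 1), bern m c t * bern d (k - c : ℕ) t := by
        rw [← sum_subset (inter_subset_left (s₂ := range (k + 1))) fun c _ hc => by
          rw [bern_of_neg d t (by simp_all), mul_zero]]
        refine sum_congr rfl fun c hc => ?_
        rw [mem_inter, mem_range, mem_range] at hc
        rw [show (k : ℤ) - c = ((k - c : ℕ) : ℤ) by omega]
    _ = ∑ c ∈ range (k + 1), bern m c t * bern d (k - c : ℕ) t :=
        sum_subset inter_subset_right fun c _ hc => by
          rw [bern_natCast_of_lt t (by simp_all), zero_mul]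
    _ = bern (m + d) k t := by
        rw [bern_natCast_s16, pow_add, coeff_mul, Nat.sum_antidiagonal_eq_sum_range_succ_mk]
        simp only [bern_natCast_s16]

lemma bern_sub_bern_sub_one (k j : ℕ) (t : ℝ) :
    bern k j t - bern k ((j : ℤ) - 1) t = ((1 - X) * (C t * X + C (1 - t)) ^ k).coeff j := by
  rw [sub_mul, one_mul, coeff_sub, bern_natCast_s16]
  cases j with
  | zero => rw [bern_of_neg k t (by omega), coeff_X_mul_zero]
  | succ i => rw [coeff_X_mul, Nat.cast_succ, add_sub_cancel_right, bern_natCast_s16]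

lemma alternating_binomial_sum_mul_sum {R : Type*} [CommRing R] (x : R) (n v : ℕ) :
    (∑ d ∈ range (n + 1), (-1) ^ (v + d) * (n.choose d : R) * x ^ d) *
      ∑ m ∈ range (v + 1), (-1) ^ (v - m) * (v.choose m : R) * x ^ m = (1 - x) ^ (n + v) := by
  have hn : ∑ d ∈ range (n + 1), (-1) ^ (v + d) * (n.choose d : R) * x ^ d
      = (-1) ^ v * (1 - x) ^ n := by
    rw [sub_eq_neg_add, add_pow, mul_sum]
    exact sum_congr rfl fun d _ => by rw [one_pow, neg_pow x, pow_add]; ring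
  have hv : ∑ m ∈ range (v + 1), (-1) ^ (v - m) * (v.choose m : R) * x ^ m = (x - 1) ^ v := by
    rw [sub_eq_add_neg, add_pow]
    exact sum_congr rfl fun m _ => by ring
  rw [hn, hv, mul_right_comm, ← mul_pow, neg_one_mul, neg_sub, pow_add, mul_comm]

lemma sum_bern_mul_bern_sub (m d j : ℕ) (t : ℝ) :
    ∑ c ∈ range (m + 1), bern m c t * (bern d ((j : ℤ) - c) t - bern d ((j : ℤ) - c - 1) t)
      = ((1 - X) * (C t * X + C (1 - t)) ^ m * (C t * X + C (1 - t)) ^ d).coeff j := by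
  simp only [mul_sub, sum_sub_distrib, sub_right_comm (j : ℤ) _ 1, sum_bern_mul_bern]
  rw [bern_sub_bern_sub_one, pow_add, mul_assoc]

lemma schoenberg_term_eq_sum_bern (n v j : ℕ) (t : ℝ) :
    ∑ d ∈ range (n + 1), (-1 : ℝ) ^ (v + d) * (n.choose d : ℝ) *
      ∑ m ∈ range (v + 1), (-1 : ℝ) ^ (v - m) * (v.choose m : ℝ) *
        ∑ c ∈ range (m + 1), bern m c t * (bern d ((j : ℤ) - c) t - bern d ((j : ℤ) - c - 1) t)
      = (-1 : ℝ) ^ j * ((n + v + 1).choose j : ℝ) * t ^ (n + v) := by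
  set q := C t * X + C (1 - t)
  have hpoly : ∑ d ∈ range (n + 1), C ((-1 : ℝ) ^ (v + d) * n.choose d) *
      ∑ m ∈ range (v + 1), C ((-1 : ℝ) ^ (v - m) * v.choose m) * ((1 - X) * q ^ m * q ^ d)
      = (1 - X) * (1 - q) ^ (n + v) := by
    rw [← alternating_binomial_sum_mul_sum, sum_mul_sum, mul_sum]
    simp only [mul_sum, map_mul, map_pow, map_neg, map_one, map_natCast]
    exact sum_congr rfl fun d _ => sum_congr rfl fun m _ => by ring
  have h1q : 1 - q = C t * (1 - X) := by simp only [q, map_sub, map_one]; ring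
  simp only [sum_bern_mul_bern_sub, ← coeff_C_mul, ← finsetSum_coeff]
  rw [hpoly, h1q, mul_pow, ← C_pow, mul_left_comm, ← pow_succ' (1 - X : ℝ[X]), coeff_C_mul,
    show (1 - X : ℝ[X]) = C (-1) * X + C 1 by simp only [map_neg, map_one]; ring,
    coeff_C_mul_X_add_C_pow, one_pow]
  ring

theorem stmt16_general (n p v : ℕ) (ω : ℝ) :
    Nspline (n + v) p ω =
      (1 / ((n ! : ℝ) * (((n + v)! : ℝ) / (n ! : ℝ)))) *
        ∑ d ∈ Finset.range (n + 1), (-1 : ℝ) ^ (v + d) * (n.choose d : ℝ) *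
          ∑ m ∈ Finset.range (v + 1), (-1 : ℝ) ^ (v - m) * (v.choose m : ℝ) *
            ∑ j ∈ Finset.range (p + 1), ∑ c ∈ Finset.range (m + 1),
              bern m (c : ℤ) (ω - j) *
                (bern d ((j : ℤ) - c) (ω - j) - bern d ((j : ℤ) - c - 1) (ω - j)) := by
  rw [Nspline, mul_div_cancel₀ _ (by positivity : (n ! : ℝ) ≠ 0)]
  congr 1
  simp only [← schoenberg_term_eq_sum_bern n v, mul_sum]
  rw [sum_comm]
  exact sum_congr rfl fun d _ => sum_comm

/-- Here `(n+v)_v = (n+v)!/n!` is the falling factorial. -/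
theorem stmt16 (n p v : ℕ) (ω : ℝ) (h1 : (p : ℝ) ≤ ω) (h2 : ω ≤ (p : ℝ) + 1) :
    Nspline (n + v) p ω =
      (1 / ((n ! : ℝ) * (((n + v)! : ℝ) / (n ! : ℝ)))) *
        ∑ d ∈ Finset.range (n + 1), (-1 : ℝ) ^ (v + d) * (n.choose d : ℝ) *
          ∑ m ∈ Finset.range (v + 1), (-1 : ℝ) ^ (v - m) * (v.choose m : ℝ) *
            ∑ j ∈ Finset.range (p + 1), ∑ c ∈ Finset.range (m + 1),
              bern m (c : ℤ) (ω - j) *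
                (bern d ((j : ℤ) - c) (ω - j) - bern d ((j : ℤ) - c - 1) (ω - j)) :=
  stmt16_general n p v ω
end

section
/- Let p be a nonnegative integer and let ω, y be real numbers with p ≤ ω ≤ p+1 and y > 0 (assuming both series converge). Then Σ_{n=0}^{∞} n! · N_{0,n}(ω;p)/(y+1)^{n+1} = Σ_{n=0}^{∞} (−1)^n · Σ_{j=0}^{p} ( B_j^n(ω−j) − B_{j−1}^n(ω−j) )/y^{n+1}. -/
open Finset Nat

/-!
With `u = ω - j`, both series split into `p + 1` series with closed forms. The identity
`∑ₙ C(n,k) uⁿ / zⁿ⁺¹ = uᵏ / (z - u)ᵏ⁺¹` (a derivative of the geometric series) and Pascal's rule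
`C(n+1,j) = C(n,j) + C(n,j-1)` give the `j`-th spline series, for `j ≥ 1`, as
`(-1)ʲ (uʲ / (y+1-u)ʲ⁺¹ + uʲ⁻¹ / (y+1-u)ʲ)`; the same identity at `u - 1` gives
`∑ₙ (-1)ⁿ Bₖⁿ(u) / yⁿ⁺¹ = (-1)ᵏ uᵏ / (y+1-u)ᵏ⁺¹`, so the `j`-th Bernstein series has the same sum.

The convergence hypotheses place `(ω, y)` where every one of these series converges: the dominant
`j = 0` part of the spline series forces `ω < y + 1`, which handles all `j < p`; the terms of the
`j = p` Bernstein series are bounded away from zero when `y ≤ p + 1 - ω`, unless `ω = p ≥ 2`, in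
which case the `j = p` summands of both series vanish identically.
-/

open Filter Topology

lemma hasSum_choose_mul_pow_sub_div_pow {u z : ℝ} (h : |u| < z) (k : ℕ) :
    HasSum (fun n : ℕ => (n.choose k : ℝ) * u ^ (n - k) / z ^ (n + 1))
      (1 / (z - u) ^ (k + 1)) := by
  have hz : 0 < z := (abs_nonneg u).trans_lt h
  have hr : ‖u / z‖ < 1 := by
    rwa [Real.norm_eq_abs, abs_div, abs_of_pos hz, div_lt_one hz]
  have hgeom := (hasSum_choose_mul_geometric_of_norm_lt_one k hr).div_const (z ^ (k + 1))
  have hval : 1 / (1 - u / z) ^ (k + 1) / z ^ (k + 1) = 1 / (z - u) ^ (k + 1) := by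
    rw [div_div, ← mul_pow, one_sub_mul, div_mul_cancel₀ _ hz.ne']
  rw [hval] at hgeom
  refine (hasSum_nat_add_iff' k).mp ?_
  rw [Finset.sum_eq_zero fun n hn => by simp [Nat.choose_eq_zero_of_lt (Finset.mem_range.mp hn)],
    sub_zero]
  refine hgeom.congr_fun fun n => ?_
  rw [Nat.add_sub_cancel, div_pow, mul_div_assoc', div_div, ← pow_add, add_assoc]

lemma hasSum_choose_mul_pow_div_pow {u z : ℝ} (h : |u| < z) (k : ℕ) :
    HasSum (fun n : ℕ => (n.choose k : ℝ) * u ^ n / z ^ (n + 1))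
      (u ^ k / (z - u) ^ (k + 1)) := by
  rw [← mul_one_div]
  refine ((hasSum_choose_mul_pow_sub_div_pow h k).mul_left (u ^ k)).congr_fun fun n => ?_
  rcases lt_or_ge n k with hn | hn
  · simp [Nat.choose_eq_zero_of_lt hn]
  · rw [mul_div_assoc', mul_left_comm, ← pow_add, Nat.add_sub_cancel' hn]

lemma bern_natCast_s19 (n k : ℕ) (u : ℝ) :
    bern n k u = n.choose k * u ^ k * (1 - u) ^ (n - k) := by
  unfold bern
  split_ifs with h
  · simp
  · simp only [Int.natCast_nonneg, Nat.cast_le, true_and, not_le] at h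
    simp [Nat.choose_eq_zero_of_lt h]

lemma bern_neg_one_s19 (n : ℕ) (u : ℝ) : bern n (-1) u = 0 := by
  simp [bern]

lemma hasSum_neg_one_pow_mul_bern {u y : ℝ} (h : |1 - u| < y) (k : ℕ) :
    HasSum (fun n : ℕ => (-1) ^ n * bern n k u / y ^ (n + 1))
      ((-1) ^ k * (u ^ k / (y + 1 - u) ^ (k + 1))) := by
  rw [abs_sub_comm] at h
  rw [show y + 1 - u = y - (u - 1) by ring, ← mul_one_div, ← mul_assoc]
  refine ((hasSum_choose_mul_pow_sub_div_pow h k).mul_left ((-1) ^ k * u ^ k)).congr_fun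
    fun n => ?_
  rw [bern_natCast_s19]
  rcases lt_or_ge n k with hn | hn
  · simp [Nat.choose_eq_zero_of_lt hn]
  · obtain ⟨m, rfl⟩ := Nat.exists_eq_add_of_le hn
    rw [Nat.add_sub_cancel_left, pow_add, pow_add, show (u - 1) = -1 * (1 - u) by ring, mul_pow]
    ring_nf

noncomputable def splineTerm (j : ℕ) (u z : ℝ) (n : ℕ) : ℝ :=
  (-1) ^ j * ((n + 1).choose j : ℝ) * u ^ n / z ^ (n + 1)

noncomputable def bernDiffTerm (j : ℕ) (u y : ℝ) (n : ℕ) : ℝ :=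
  (-1) ^ n * ((bern n j u - bern n ((j : ℤ) - 1) u) / y ^ (n + 1))

lemma bernDiffTerm_zero (u y : ℝ) (n : ℕ) :
    bernDiffTerm 0 u y n = (-1) ^ n * bern n ((0 : ℕ) : ℤ) u / y ^ (n + 1) := by
  simp [bernDiffTerm, bern_neg_one_s19, mul_div_assoc]

lemma bernDiffTerm_succ (k : ℕ) (u y : ℝ) (n : ℕ) :
    bernDiffTerm (k + 1) u y n =
      (-1) ^ n * ((bern n ((k + 1 : ℕ) : ℤ) u - bern n k u) / y ^ (n + 1)) := by
  simp only [bernDiffTerm, Nat.cast_add_one, add_sub_cancel_right]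

lemma splineTerm_eq_zero_of_two_le {j : ℕ} (hj : 2 ≤ j) (z : ℝ) (n : ℕ) :
    splineTerm j 0 z n = 0 := by
  cases n with
  | zero => simp [splineTerm, Nat.choose_eq_zero_of_lt (by omega : 1 < j)]
  | succ n => simp [splineTerm]

lemma bernDiffTerm_eq_zero_of_two_le {j : ℕ} (hj : 2 ≤ j) (y : ℝ) (n : ℕ) :
    bernDiffTerm j 0 y n = 0 := by
  obtain ⟨k, rfl⟩ := Nat.exists_eq_add_of_le' (by omega : 1 ≤ j)
  rw [bernDiffTerm_succ, bern_natCast_s19, bern_natCast_s19, zero_pow (by omega), zero_pow (by omega)]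
  simp

lemma exists_hasSum_splineTerm_bernDiffTerm {j : ℕ} {u y : ℝ}
    (h : |1 - u| < y ∨ u = 0 ∧ 2 ≤ j) :
    ∃ v, HasSum (splineTerm j u (y + 1)) v ∧ HasSum (bernDiffTerm j u y) v := by
  rcases h with h | ⟨rfl, hj⟩
  swap
  · refine ⟨0, ?_, ?_⟩ <;> convert hasSum_zero with n
    exacts [splineTerm_eq_zero_of_two_le hj _ n, bernDiffTerm_eq_zero_of_two_le hj _ n]
  have hu : |u| < y + 1 := by
    rw [abs_lt] at h ⊢
    constructor <;> linarith
  cases j with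
  | zero =>
    refine ⟨_, ((hasSum_choose_mul_pow_div_pow hu 0).mul_left ((-1) ^ 0)).congr_fun fun n => ?_,
      (hasSum_neg_one_pow_mul_bern h 0).congr_fun (bernDiffTerm_zero u y)⟩
    simp [splineTerm]
  | succ m =>
    have hspline := ((hasSum_choose_mul_pow_div_pow hu (m + 1)).mul_left ((-1) ^ (m + 1))).sub
      ((hasSum_choose_mul_pow_div_pow hu m).mul_left ((-1) ^ m))
    have hbern := (hasSum_neg_one_pow_mul_bern h (m + 1)).sub (hasSum_neg_one_pow_mul_bern h m)
    refine ⟨_, hspline.congr_fun fun n => ?_, hbern.congr_fun fun n => ?_⟩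
    · rw [splineTerm, Nat.choose_succ_succ']
      push_cast
      ring
    · rw [bernDiffTerm_succ]
      ring

lemma tendsto_choose_succ_mul_pow {r : ℝ} (hr : |r| < 1) (k : ℕ) :
    Tendsto (fun n : ℕ => ((n + 1).choose (k + 1) : ℝ) * r ^ n) atTop (𝓝 0) := by
  have hsum := summable_choose_mul_geometric_of_norm_lt_one (k + 1)
    (by rwa [Real.norm_eq_abs, abs_abs] : ‖|r|‖ < 1)
  refine (hsum.of_norm_bounded fun n => ?_).tendsto_atTop_zero
  rw [norm_mul, norm_pow, Real.norm_natCast, Real.norm_eq_abs]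
  gcongr
  omega

lemma lt_of_tendsto_sum_splineTerm {p : ℕ} {ω z : ℝ} (hp : (p : ℝ) ≤ ω) (hz : 0 < z)
    (h : Tendsto (fun n => ∑ j ∈ range (p + 1), splineTerm j (ω - j) z n) atTop (𝓝 0)) :
    ω < z := by
  by_contra! hzω
  have hω : 0 < ω := hz.trans_le hzω
  set S : ℕ → ℝ := fun n =>
    ∑ j ∈ range (p + 1), (-1) ^ j * ((n + 1).choose j : ℝ) * ((ω - j) / ω) ^ n
  have hS : Tendsto S atTop (𝓝 1) := by
    have hterm : ∀ i ∈ range p, Tendsto (fun n : ℕ =>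
        (-1) ^ (i + 1) * ((n + 1).choose (i + 1) : ℝ) * ((ω - (i + 1 : ℕ)) / ω) ^ n)
        atTop (𝓝 0) := by
      intro i hi
      have hip : ((i + 1 : ℕ) : ℝ) ≤ p := by exact_mod_cast Finset.mem_range.mp hi
      have hr : |(ω - (i + 1 : ℕ)) / ω| < 1 := by
        rw [abs_lt, lt_div_iff₀ hω, div_lt_iff₀ hω]
        constructor <;> push_cast at hip ⊢ <;> linarith
      simpa [mul_assoc] using (tendsto_choose_succ_mul_pow hr i).const_mul ((-1) ^ (i + 1))
    convert (tendsto_finsetSum _ hterm).add_const 1 using 2 with n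
    · simp [S, sum_range_succ', div_self hω.ne']
    · simp
  have hsum : ∀ n, ∑ j ∈ range (p + 1), splineTerm j (ω - j) z n = S n * (ω / z) ^ n / z := by
    intro n
    simp only [S, splineTerm, Finset.sum_mul, Finset.sum_div]
    refine sum_congr rfl fun j _ => ?_
    rw [div_pow, div_pow, pow_succ]
    field_simp
  have hS0 : Tendsto S atTop (𝓝 0) := by
    have hbound := h.norm.const_mul z
    rw [norm_zero, mul_zero] at hbound
    refine squeeze_zero_norm (fun n => ?_) hbound
    have hpow : 1 ≤ (ω / z) ^ n := one_le_pow₀ ((one_le_div hz).mpr hzω)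
    rw [hsum n, norm_div, norm_mul, norm_pow, Real.norm_of_nonneg hz.le,
      Real.norm_of_nonneg (div_pos hω hz).le, mul_div_cancel₀ _ hz.ne']
    exact le_mul_of_one_le_right (norm_nonneg _) hpow
  exact one_ne_zero (tendsto_nhds_unique hS hS0)

lemma tendsto_choose_succ_mul_sub_choose_mul {u : ℝ} (hu : 0 < u) (w : ℝ) (k : ℕ) :
    Tendsto (fun n : ℕ => (n.choose (k + 1) : ℝ) * u - n.choose k * w) atTop atTop := by
  have hlin : Tendsto (fun n : ℕ => ((n : ℝ) - k) * (u / (k + 1)) + -w) atTop atTop :=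
    tendsto_atTop_add_const_right _ _ <| (tendsto_atTop_add_const_right _ _
      tendsto_natCast_atTop_atTop).atTop_mul_const (by positivity)
  refine tendsto_atTop_mono' _ ?_ hlin
  filter_upwards [hlin.eventually_ge_atTop 0, eventually_ge_atTop k] with n hpos hkn
  have hpascal : (n.choose (k + 1) : ℝ) = n.choose k * ((n - k) / (k + 1)) := by
    have h : (n.choose (k + 1) : ℝ) * (k + 1) = n.choose k * ((n : ℝ) - k) := by
      rw [← Nat.cast_sub hkn]
      exact_mod_cast Nat.choose_succ_right_eq n k
    rw [mul_div_assoc', eq_div_iff (by positivity), h]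
  have hchoose : (1 : ℝ) ≤ n.choose k := by exact_mod_cast Nat.choose_pos hkn
  calc ((n : ℝ) - k) * (u / (k + 1)) + -w
      ≤ n.choose k * (((n : ℝ) - k) * (u / (k + 1)) + -w) := le_mul_of_one_le_left hpos hchoose
    _ = _ := by rw [hpascal]; ring

lemma one_div_le_abs_bernDiffTerm_zero {u y : ℝ} (hy : 0 < y) (hyw : y ≤ 1 - u) (n : ℕ) :
    1 / y ≤ |bernDiffTerm 0 u y n| := by
  rw [bernDiffTerm_zero, bern_natCast_s19]
  simp only [Nat.choose_zero_right, Nat.cast_one, pow_zero, one_mul, Nat.sub_zero, abs_div,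
    abs_mul, abs_pow, abs_neg, abs_one, one_pow, abs_of_pos hy, abs_of_pos (hy.trans_le hyw)]
  rw [div_le_div_iff₀ hy (by positivity), one_mul, pow_succ]
  gcongr

lemma le_abs_bernDiffTerm_succ {k n : ℕ} {u y : ℝ} (hkn : k + 1 ≤ n) (hy : 0 < y) (hu : 0 ≤ u)
    (hyw : y ≤ 1 - u) :
    u ^ k * |n.choose (k + 1) * u - n.choose k * (1 - u)| / y ^ (k + 2) ≤
      |bernDiffTerm (k + 1) u y n| := by
  obtain ⟨m, rfl⟩ := Nat.exists_eq_add_of_le' hkn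
  have hterm : bernDiffTerm (k + 1) u y (m + (k + 1)) =
      (-1) ^ (m + (k + 1)) * (u ^ k * (1 - u) ^ m * (((m + (k + 1)).choose (k + 1) : ℝ) * u -
        ((m + (k + 1)).choose k : ℝ) * (1 - u)) / y ^ (m + (k + 1) + 1)) := by
    rw [bernDiffTerm_succ, bern_natCast_s19, bern_natCast_s19, Nat.add_sub_cancel,
      show m + (k + 1) - k = m + 1 by omega]
    ring
  rw [hterm, abs_mul, abs_pow, abs_neg, abs_one, one_pow, one_mul, abs_div, abs_mul, abs_mul,
    abs_of_nonneg (pow_nonneg hu k), abs_of_nonneg (pow_nonneg (hy.le.trans hyw) m),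
    abs_of_pos (pow_pos hy _)]
  calc u ^ k * |_| / y ^ (k + 2) = u ^ k * y ^ m * |_| / y ^ (m + (k + 1) + 1) := by
        rw [show m + (k + 1) + 1 = m + (k + 2) by ring, pow_add]
        field_simp
        ring
    _ ≤ _ := by gcongr

lemma abs_one_sub_lt_of_tendsto_bernDiffTerm {j : ℕ} {u y : ℝ} (hy : 0 < y) (hu0 : 0 ≤ u)
    (hu1 : u ≤ 1) (h : Tendsto (bernDiffTerm j u y) atTop (𝓝 0)) :
    |1 - u| < y ∨ u = 0 ∧ 2 ≤ j := by
  rw [abs_of_nonneg (sub_nonneg.mpr hu1)]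
  by_contra! hcon
  obtain ⟨hyw, hj⟩ := hcon
  suffices ∃ c > 0, ∀ᶠ n in atTop, c ≤ |bernDiffTerm j u y n| by
    obtain ⟨c, hc, hev⟩ := this
    obtain ⟨n, hcn, hn⟩ := (hev.and (Metric.tendsto_nhds.mp h c hc)).exists
    rw [Real.dist_0_eq_abs] at hn
    linarith
  cases j with
  | zero => exact ⟨1 / y, by positivity, .of_forall (one_div_le_abs_bernDiffTerm_zero hy hyw)⟩
  | succ k =>
    obtain ⟨hpow, hD⟩ : 0 < u ^ k ∧
        ∀ᶠ n : ℕ in atTop, 1 ≤ |(n.choose (k + 1) : ℝ) * u - n.choose k * (1 - u)| := by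
      rcases hu0.eq_or_lt with rfl | hu
      · obtain rfl : k = 0 := by have := hj rfl; omega
        simp
      · refine ⟨pow_pos hu k, ?_⟩
        filter_upwards [(tendsto_choose_succ_mul_sub_choose_mul hu (1 - u) k).eventually_ge_atTop 1]
          with n hn using hn.trans (le_abs_self _)
    refine ⟨u ^ k / y ^ (k + 2), by positivity, ?_⟩
    filter_upwards [hD, eventually_ge_atTop (k + 1)] with n hn hkn
    refine le_trans ?_ (le_abs_bernDiffTerm_succ hkn hy hu0 hyw)
    gcongr
    exact le_mul_of_one_le_right hpow.le hn

lemma factorial_mul_Nspline_div (n p : ℕ) (ω z : ℝ) :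
    (n ! : ℝ) * Nspline n p ω / z ^ (n + 1) = ∑ j ∈ range (p + 1), splineTerm j (ω - j) z n := by
  rw [Nspline, ← mul_assoc, mul_one_div_cancel (by positivity), one_mul, sum_div]
  rfl

lemma neg_one_pow_mul_sum_bern_sub (n p : ℕ) (ω y : ℝ) :
    (-1 : ℝ) ^ n * ∑ j ∈ range (p + 1), (bern n j (ω - j) - bern n ((j : ℤ) - 1) (ω - j)) /
      y ^ (n + 1) = ∑ j ∈ range (p + 1), bernDiffTerm j (ω - j) y n :=
  mul_sum _ _ _

theorem stmt19 (p : ℕ) (ω y : ℝ) (h1 : (p : ℝ) ≤ ω) (h2 : ω ≤ (p : ℝ) + 1) (hy : 0 < y)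
    (hf : Summable fun n : ℕ => (n ! : ℝ) * Nspline n p ω / (y + 1) ^ (n + 1))
    (hg : Summable fun n : ℕ => (-1 : ℝ) ^ n *
      ∑ j ∈ Finset.range (p + 1),
        (bern n (j : ℤ) (ω - j) - bern n ((j : ℤ) - 1) (ω - j)) / y ^ (n + 1)) :
    ∑' n : ℕ, (n ! : ℝ) * Nspline n p ω / (y + 1) ^ (n + 1) =
      ∑' n : ℕ, (-1 : ℝ) ^ n *
        ∑ j ∈ Finset.range (p + 1),
          (bern n (j : ℤ) (ω - j) - bern n ((j : ℤ) - 1) (ω - j)) / y ^ (n + 1) := by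
  simp only [factorial_mul_Nspline_div, neg_one_pow_mul_sum_bern_sub] at hf hg ⊢
  have hω : ω < y + 1 := lt_of_tendsto_sum_splineTerm h1 (by linarith) hf.tendsto_atTop_zero
  have hbelow : ∀ j < p, |1 - (ω - j)| < y := fun j hj => by
    have : (j : ℝ) + 1 ≤ p := by exact_mod_cast hj
    rw [abs_lt]
    constructor <;> linarith
  have htop : |1 - (ω - p)| < y ∨ ω - p = 0 ∧ 2 ≤ p := by
    refine abs_one_sub_lt_of_tendsto_bernDiffTerm hy (by linarith) (by linarith) ?_
    have hsumm := hg.sub <| summable_sum fun j hj =>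
      (exists_hasSum_splineTerm_bernDiffTerm (j := j)
        (Or.inl (hbelow j (mem_range.mp hj)))).choose_spec.2.summable
    simp only [sum_range_succ, add_sub_cancel_left] at hsumm
    exact hsumm.tendsto_atTop_zero
  have hsums : ∀ j ∈ range (p + 1), ∃ v, HasSum (splineTerm j (ω - j) (y + 1)) v ∧
      HasSum (bernDiffTerm j (ω - j) y) v := fun j hj =>
    exists_hasSum_splineTerm_bernDiffTerm <|
      (mem_range_succ_iff.mp hj).lt_or_eq.elim (fun hj => Or.inl (hbelow j hj)) (· ▸ htop)
  choose! v hv using hsums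
  rw [(hasSum_sum fun j hj => (hv j hj).1).tsum_eq, (hasSum_sum fun j hj => (hv j hj).2).tsum_eq]
end
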